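/- arXiv:2506.23223 — 8 statements merged into one kernel-verified Lean document; each statement's English description precedes it below -/
import Mathlib

section
/- As n → ∞, the number |T_n| of rooted binary phylogenetic trees with leaf set a nonempty subset of [n] satisfies |T_n| ~ sqrt(e/(π n³)) · 2^{n-1} · n!. -/
/-!
Grouping the trees by the number `k` of labels missing from the leaf set,
`|T_n| / (2n-3)!! = ∑_{k<n} C(n,k) (2(n-k)-3)!! / (2n-3)!!`, and the `k`-th term equals
`(1/k!) ∏_{i<k} (n-i)/(2(n-i)-3)`. Each factor tends to `1/2` and is at most `2`, so Tannery's
theorem gives `|T_n| / (2n-3)!! → ∑ (1/2)^k/k! = √e`. On the other hand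
`(2n-1) (2n-3)!! 2^n = C(2n,n) n!`, and Stirling's formula `C(2n,n) ~ 4^n/√(πn)` yields
`(2n-3)!! ~ 2^(n-1) n! / √(π n³)`.
-/

open Filter Real Topology Finset
open scoped Nat

theorem tendsto_sum_range_of_dominated_convergence {G : Type*} [NormedAddCommGroup G]
    [CompleteSpace G] {f : ℕ → ℕ → G} {g : ℕ → G} {bound : ℕ → ℝ} (h_sum : Summable bound)
    (hab : ∀ k, Tendsto (f · k) atTop (𝓝 (g k)))
    (h_bound : ∀ n, ∀ k < n, ‖f n k‖ ≤ bound k) :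
    Tendsto (fun n ↦ ∑ k ∈ range n, f n k) atTop (𝓝 (∑' k, g k)) := by
  have h_tsum (n : ℕ) : ∑' k, (if k < n then f n k else 0) = ∑ k ∈ range n, f n k := by
    rw [tsum_eq_sum (s := range n) fun k hk ↦ if_neg (by simpa using hk)]
    exact sum_congr rfl fun k hk ↦ if_pos (mem_range.mp hk)
  refine (tendsto_tsum_of_dominated_convergence h_sum (fun k ↦ ?_)
    (Eventually.of_forall fun n k ↦ ?_)).congr h_tsum
  · refine (hab k).congr' ?_
    filter_upwards [eventually_gt_atTop k] with n hn
    rw [if_pos hn]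
  · split_ifs with hk
    · exact h_bound n k hk
    · simpa using (norm_nonneg _).trans (h_bound (k + 1) k k.lt_succ_self)

theorem Nat.doubleFactorial_two_mul_sub_one {n : ℕ} (hn : n ≠ 0) :
    (2 * n - 1)‼ = (2 * n - 1) * (2 * n - 3)‼ := by
  obtain ⟨m, rfl⟩ := Nat.exists_eq_succ_of_ne_zero hn
  rw [show 2 * (m + 1) - 1 = 2 * m + 1 by omega, show 2 * (m + 1) - 3 = 2 * m - 1 by omega]
  exact Nat.doubleFactorial_add_one (2 * m)

theorem Nat.choose_succ_mul_doubleFactorial {n k : ℕ} (hk : k + 2 ≤ n) :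
    n.choose (k + 1) * (2 * (n - (k + 1)) - 3)‼ * ((k + 1) * (2 * (n - k) - 3)) =
      n.choose k * (2 * (n - k) - 3)‼ * (n - k) := by
  have h := Nat.doubleFactorial_two_mul_sub_one (n := n - (k + 1)) (by omega)
  rw [show 2 * (n - (k + 1)) - 1 = 2 * (n - k) - 3 by omega] at h
  calc _ = n.choose (k + 1) * (k + 1) * ((2 * (n - k) - 3) * (2 * (n - (k + 1)) - 3)‼) := by ring
    _ = n.choose k * (n - k) * (2 * (n - k) - 3)‼ := by rw [Nat.choose_succ_right_eq, ← h]
    _ = _ := by ring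

theorem choose_mul_doubleFactorial_div_eq_prod {n k : ℕ} (hk : k < n) :
    (n.choose k * (2 * (n - k) - 3)‼ : ℝ) / (2 * n - 3)‼ =
      (∏ i ∈ range k, ((n - i : ℕ) : ℝ) / (2 * ((n - i : ℕ) : ℝ) - 3)) / k ! := by
  induction k with
  | zero => simp [div_self (by positivity : ((2 * n - 3)‼ : ℝ) ≠ 0)]
  | succ k ih =>
    have h := congrArg (Nat.cast : ℕ → ℝ)
      (Nat.choose_succ_mul_doubleFactorial (by omega : k + 2 ≤ n))
    push_cast [Nat.cast_sub (by omega : 3 ≤ 2 * (n - k))] at h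
    have hpos : (0 : ℝ) < 2 * ((n - k : ℕ) : ℝ) - 3 := by
      have : (2 : ℝ) ≤ ((n - k : ℕ) : ℝ) := by exact_mod_cast (by omega : 2 ≤ n - k)
      linarith
    rw [prod_range_succ, Nat.factorial_succ, Nat.cast_mul, mul_comm ((k + 1 : ℕ) : ℝ),
      ← div_mul_div_comm, ← ih (by omega)]
    field_simp
    rw [eq_div_iff (by linarith)]
    push_cast
    linear_combination h

theorem tendsto_div_mul_add_atTop {a : ℝ} (ha : a ≠ 0) (b : ℝ) :
    Tendsto (fun x : ℝ ↦ x / (a * x + b)) atTop (𝓝 a⁻¹) := by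
  have h := ((tendsto_inv_atTop_zero.const_mul b).const_add a).inv₀ (by simpa using ha)
  rw [mul_zero, add_zero] at h
  refine h.congr' ?_
  filter_upwards [eventually_gt_atTop 0] with x hx
  field_simp

theorem tendsto_choose_mul_doubleFactorial_div (k : ℕ) :
    Tendsto (fun n : ℕ ↦ (n.choose k * (2 * (n - k) - 3)‼ : ℝ) / (2 * n - 3)‼) atTop
      (𝓝 ((1 / 2) ^ k / k !)) := by
  have hfactor (i : ℕ) : Tendsto (fun n : ℕ ↦ ((n - i : ℕ) : ℝ) / (2 * ((n - i : ℕ) : ℝ) - 3))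
      atTop (𝓝 (1 / 2)) := by
    simpa [sub_eq_add_neg, Function.comp_def] using
      (tendsto_div_mul_add_atTop two_ne_zero (-3)).comp
        (tendsto_natCast_atTop_atTop.comp (tendsto_sub_atTop_nat i))
  have h := (tendsto_finsetProd (range k) fun i _ ↦ hfactor i).div_const (k ! : ℝ)
  rw [prod_const, card_range] at h
  refine h.congr' ?_
  filter_upwards [eventually_gt_atTop k] with n hn
  exact (choose_mul_doubleFactorial_div_eq_prod hn).symm

theorem norm_choose_mul_doubleFactorial_div_le {n k : ℕ} (hk : k < n) :
    ‖(n.choose k * (2 * (n - k) - 3)‼ : ℝ) / (2 * n - 3)‼‖ ≤ 2 ^ k / k ! := by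
  have hfactor : ∀ i ∈ range k, 0 ≤ ((n - i : ℕ) : ℝ) / (2 * ((n - i : ℕ) : ℝ) - 3) ∧
      ((n - i : ℕ) : ℝ) / (2 * ((n - i : ℕ) : ℝ) - 3) ≤ 2 := by
    intro i hi
    have : (2 : ℝ) ≤ ((n - i : ℕ) : ℝ) := by
      exact_mod_cast (by simp only [mem_range] at hi; omega : 2 ≤ n - i)
    exact ⟨div_nonneg (by linarith) (by linarith),
      (div_le_iff₀ (by linarith)).mpr (by linarith)⟩
  rw [Real.norm_of_nonneg (by positivity), choose_mul_doubleFactorial_div_eq_prod hk]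
  gcongr
  calc _ ≤ ∏ _i ∈ range k, (2 : ℝ) :=
        prod_le_prod (fun i hi ↦ (hfactor i hi).1) fun i hi ↦ (hfactor i hi).2
    _ = 2 ^ k := by rw [prod_const, card_range]

theorem tendsto_sum_choose_mul_doubleFactorial_div :
    Tendsto (fun n : ℕ ↦ (∑ j ∈ Icc 1 n, (n.choose j * (2 * j - 3)‼ : ℝ)) / (2 * n - 3)‼)
      atTop (𝓝 (√(exp 1))) := by
  have h_reflect (n : ℕ) : ∑ j ∈ Icc 1 n, (n.choose j * (2 * j - 3)‼ : ℝ) =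
      ∑ k ∈ range n, (n.choose k * (2 * (n - k) - 3)‼ : ℝ) := by
    refine sum_nbij' (n - ·) (n - ·) (by simp; omega) (by simp; omega)
      (by simp; omega) (by simp; omega) fun j hj ↦ ?_
    rw [mem_Icc] at hj
    rw [Nat.choose_symm hj.2, Nat.sub_sub_self hj.2]
  have h_exp : ∑' k : ℕ, (1 / 2 : ℝ) ^ k / k ! = √(exp 1) := by
    rw [← exp_half, (NormedSpace.expSeries_div_hasSum_exp (1 / 2 : ℝ)).tsum_eq, exp_eq_exp_ℝ,
      one_div]
  simp_rw [h_reflect, sum_div, ← h_exp]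
  exact tendsto_sum_range_of_dominated_convergence (Real.summable_pow_div_factorial 2)
    tendsto_choose_mul_doubleFactorial_div fun n k hk ↦ norm_choose_mul_doubleFactorial_div_le hk

theorem Nat.doubleFactorial_two_mul_sub_one_mul_two_pow (n : ℕ) :
    (2 * n - 1)‼ * 2 ^ n = n.centralBinom * n ! := by
  rcases Nat.eq_zero_or_pos n with rfl | hn
  · rfl
  refine Nat.eq_of_mul_eq_mul_right (Nat.factorial_pos n) ?_
  calc (2 * n - 1)‼ * 2 ^ n * n ! = (2 * n - 1 + 1)‼ * (2 * n - 1)‼ := by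
        rw [Nat.sub_add_cancel (by omega), Nat.doubleFactorial_two_mul]; ring
    _ = (2 * n)! := by rw [← Nat.factorial_eq_mul_doubleFactorial, Nat.sub_add_cancel (by omega)]
    _ = n.centralBinom * n ! * n ! := by
      rw [Nat.centralBinom_eq_two_mul_choose, ← Nat.choose_mul_factorial_mul_factorial
        (by omega : n ≤ 2 * n), show 2 * n - n = n by omega]

theorem centralBinom_mul_sqrt_div_four_pow_eq_stirlingSeq {n : ℕ} (hn : n ≠ 0) :
    (n.centralBinom : ℝ) * √n / 4 ^ n =
      Stirling.stirlingSeq (2 * n) / Stirling.stirlingSeq n ^ 2 := by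
  have h_fact : ((2 * n)! : ℝ) = n.centralBinom * n ! * n ! := by
    rw [Nat.centralBinom_eq_two_mul_choose, ← Nat.choose_mul_factorial_mul_factorial
        (by omega : n ≤ 2 * n), show 2 * n - n = n by omega]
    push_cast; ring
  have h_sqrt : √(2 * (2 * (n : ℝ))) = 2 * √n := by
    rw [← mul_assoc, sqrt_mul (by norm_num)]; norm_num
  have h_pow : (2 * (n : ℝ) / exp 1) ^ (2 * n) = 4 ^ n * ((n / exp 1) ^ n) ^ 2 := by
    rw [mul_div_assoc, mul_pow, pow_mul, ← pow_mul _ n 2, mul_comm n 2, pow_mul]; norm_num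
  simp only [Stirling.stirlingSeq, Nat.cast_mul, Nat.cast_ofNat]
  rw [h_fact, h_sqrt, h_pow, div_pow (n ! : ℝ), mul_pow, sq_sqrt (by positivity)]
  field_simp
  rw [sq_sqrt (Nat.cast_nonneg n)]

theorem tendsto_centralBinom_mul_sqrt_div_four_pow :
    Tendsto (fun n : ℕ ↦ (n.centralBinom : ℝ) * √n / 4 ^ n) atTop (𝓝 (√π)⁻¹) := by
  have h := (Stirling.tendsto_stirlingSeq_sqrt_pi.comp (tendsto_id.const_mul_atTop' two_pos)).div
    (Stirling.tendsto_stirlingSeq_sqrt_pi.pow 2) (by positivity)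
  rw [sq_sqrt pi_pos.le, sqrt_div_self] at h
  refine h.congr' ?_
  filter_upwards [eventually_ne_atTop 0] with n hn
  exact (centralBinom_mul_sqrt_div_four_pow_eq_stirlingSeq hn).symm

theorem tendsto_doubleFactorial_two_mul_sub_three_mul_sqrt_div :
    Tendsto (fun n : ℕ ↦ ((2 * n - 3)‼ : ℝ) * √(π * n ^ 3) / (2 ^ (n - 1) * n !)) atTop
      (𝓝 1) := by
  have h := ((tendsto_centralBinom_mul_sqrt_div_four_pow.mul_const √π).mul
    (tendsto_natCast_div_add_atTop (-1 / 2 : ℝ)))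
  rw [inv_mul_cancel₀ (by positivity), one_mul] at h
  refine h.congr' ?_
  filter_upwards [eventually_ne_atTop 0] with n hn
  have h_nat :=
    congrArg (Nat.cast : ℕ → ℝ) (Nat.doubleFactorial_two_mul_sub_one_mul_two_pow n)
  rw [Nat.doubleFactorial_two_mul_sub_one hn] at h_nat
  push_cast [Nat.cast_sub (by omega : 1 ≤ 2 * n)] at h_nat
  have hn' : (1 : ℝ) ≤ n := by exact_mod_cast Nat.one_le_iff_ne_zero.mpr hn
  rw [sqrt_mul pi_pos.le, show (n : ℝ) ^ 3 = n ^ 2 * n by ring, sqrt_mul (by positivity),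
    sqrt_sq (by positivity), pow_sub₀ _ two_ne_zero (Nat.one_le_iff_ne_zero.mpr hn),
    show (4 : ℝ) ^ n = 2 ^ n * 2 ^ n by rw [← mul_pow]; norm_num]
  field_simp
  rw [div_eq_iff (by linarith)]
  linear_combination -h_nat

theorem trees_on_subsets_asymptotics :
    Tendsto (fun n : ℕ =>
        (∑ j ∈ Finset.Icc 1 n, (n.choose j * Nat.doubleFactorial (2 * j - 3) : ℝ)) /
          (Real.sqrt (Real.exp 1 / (Real.pi * (n : ℝ) ^ 3)) * 2 ^ (n - 1) * n.factorial))
      atTop (nhds 1) := by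
  have h := (tendsto_sum_choose_mul_doubleFactorial_div.mul
    tendsto_doubleFactorial_two_mul_sub_three_mul_sqrt_div).div_const √(exp 1)
  rw [mul_one, div_self (by positivity)] at h
  refine h.congr' ?_
  filter_upwards [eventually_ne_atTop 0] with n hn
  rw [sqrt_div (exp_pos 1).le]
  field_simp
end

section
/- Let C be a subset of the set T of all rooted binary phylogenetic trees (with leaf sets finite subsets of ℕ) that is closed under leaf relabelling and under restriction to leaf subsets. If C ≠ T, then |C ∩ T_n| / |T_n| → 0 as n → ∞, assuming that for a uniformly random tree T_n from T_n, the probability that T_n contains a given fixed tree shape τ as an induced subtree tends to 1 as n → ∞. -/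
open Filter
open scoped Classical

/-! A tree outside `C` has a shape `τ` that no tree of `C` can contain as an induced subtree,
since `C` is closed under restriction and relabelling. So the trees of `C ∩ Tn n` lie among those
avoiding `τ`, whose proportion tends to `0` by hypothesis. -/

namespace Finset

variable {ι : Type*} (s : Finset ι) {p q : ι → Prop} [DecidablePred p] [DecidablePred q]

theorem card_filter_add_card_filter_le_of_imp_not (h : ∀ x ∈ s, p x → ¬ q x) :
    #(s.filter p) + #(s.filter q) ≤ #s := by
  rw [← card_union_of_disjoint (disjoint_filter.2 h)]
  exact card_le_card (union_subset (filter_subset p s) (filter_subset q s))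

theorem card_filter_div_le_one_sub_of_imp_not (h : ∀ x ∈ s, p x → ¬ q x) :
    (#(s.filter p) : ℝ) / #s ≤ 1 - (#(s.filter q) : ℝ) / #s := by
  rcases s.eq_empty_or_nonempty with rfl | hs
  · simp
  have hpos : (0 : ℝ) < #s := by exact_mod_cast hs.card_pos
  rw [div_le_iff₀ hpos, sub_mul, one_mul, div_mul_cancel₀ _ hpos.ne', le_sub_iff_add_le]
  exact_mod_cast card_filter_add_card_filter_le_of_imp_not s h

end Finset

theorem notMem_of_restrict_sameShape {α : Type*} {L : α → Finset ℕ}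
    {restrict : α → Finset ℕ → α} {sameShape : α → α → Prop} {C : Set α}
    (hrelabel : ∀ T ∈ C, ∀ T', sameShape T T' → T' ∈ C)
    (hrestrict : ∀ T ∈ C, ∀ Y ⊆ L T, Y.Nonempty → restrict T Y ∈ C)
    {τ : α} (hτ : τ ∉ C) {T : α} (hT : ∃ Y ⊆ L T, Y.Nonempty ∧ sameShape (restrict T Y) τ) :
    T ∉ C := by
  obtain ⟨Y, hY, hYne, hshape⟩ := hT
  exact fun hTC => hτ (hrelabel _ (hrestrict T hTC Y hY hYne) τ hshape)

theorem closed_subclass_of_trees_dichotomy_general {α : Type*}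
    (L : α → Finset ℕ) (restrict : α → Finset ℕ → α) (sameShape : α → α → Prop)
    (Tn : ℕ → Finset α)
    (C : Set α)
    (hrelabel : ∀ T ∈ C, ∀ T', sameShape T T' → T' ∈ C)
    (hrestrict : ∀ T ∈ C, ∀ Y ⊆ L T, Y.Nonempty → restrict T Y ∈ C)
    (hne : C ≠ Set.univ)
    (hshape : ∀ τ : α,
      Tendsto (fun n =>
          (((Tn n).filter fun T =>
              ∃ Y ⊆ L T, Y.Nonempty ∧ sameShape (restrict T Y) τ).card : ℝ) / (Tn n).card)
        atTop (nhds 1)) :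
    Tendsto (fun n => (((Tn n).filter fun T => T ∈ C).card : ℝ) / (Tn n).card)
      atTop (nhds 0) := by
  obtain ⟨τ, hτ⟩ := (Set.ne_univ_iff_exists_notMem C).1 hne
  have hbound n := (Tn n).card_filter_div_le_one_sub_of_imp_not (p := (· ∈ C))
    fun _ _ hTC hTτ => notMem_of_restrict_sameShape hrelabel hrestrict hτ hTτ hTC
  have hlimit := (tendsto_const_nhds (x := (1 : ℝ))).sub (hshape τ)
  rw [sub_self] at hlimit
  exact squeeze_zero (fun n => by positivity) hbound hlimit

theorem closed_subclass_of_trees_dichotomy {α : Type*}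
    (L : α → Finset ℕ) (restrict : α → Finset ℕ → α) (sameShape : α → α → Prop)
    (Tn : ℕ → Finset α) (hTn : ∀ n, (Tn n).Nonempty)
    (C : Set α)
    (hrelabel : ∀ T ∈ C, ∀ T', sameShape T T' → T' ∈ C)
    (hrestrict : ∀ T ∈ C, ∀ Y ⊆ L T, Y.Nonempty → restrict T Y ∈ C)
    (hne : C ≠ Set.univ)
    (hshape : ∀ τ : α,
      Tendsto (fun n =>
          (((Tn n).filter fun T =>
              ∃ Y ⊆ L T, Y.Nonempty ∧ sameShape (restrict T Y) τ).card : ℝ) / (Tn n).card)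
        atTop (nhds 1)) :
    Tendsto (fun n => (((Tn n).filter fun T => T ∈ C).card : ℝ) / (Tn n).card)
      atTop (nhds 0) :=
  closed_subclass_of_trees_dichotomy_general L restrict sameShape Tn C hrelabel hrestrict hne hshape
end

section
/- Assume the number of galled networks on ℓ labelled leaves satisfies GN_ℓ ~ (sqrt(2e·e^{1/4})/4)·ℓ^{-1}·(8/e²)^ℓ·ℓ^{2ℓ} and the number of simplicial networks satisfies SN_ℓ ~ (sqrt(2·e^{1/2})/4)·ℓ^{-1}·(8/e²)^ℓ·ℓ^{2ℓ}. Then ∑_{j=1}^n C(n,j)·SN_j / ∑_{j=1}^n C(n,j)·GN_j → e^{-3/8} as n → ∞. -/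
open Filter Real Finset Topology

/-! Up to the constants √(2e·e^{1/4})/4 and √(2e^{1/2})/4, both counts grow like
`A ℓ = ℓ⁻¹ r^ℓ ℓ^{2ℓ}` with `r = 8/e²`. This growth is so fast that `∑_{j<n} C(n,j) A j` is
only `O(A n / n)`: bounding `C(n,j) ≤ n^{n-j}` and `j ≤ n` gives `C(n,j) A j ≤ (r n)^{-(n-j)} A n`,
a geometric series. Hence both binomial sums are asymptotic to their top term `j = n`, and their
ratio tends to the ratio of the constants, `e^{-3/8}`. -/

noncomputable def netGrowth (r : ℝ) (ℓ : ℕ) : ℝ := (ℓ : ℝ)⁻¹ * r ^ ℓ * (ℓ : ℝ) ^ (2 * ℓ)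

section netGrowth

variable {r : ℝ}

lemma netGrowth_nonneg (hr : 0 ≤ r) (ℓ : ℕ) : 0 ≤ netGrowth r ℓ := by
  unfold netGrowth; positivity

lemma netGrowth_pos (hr : 0 < r) {ℓ : ℕ} (hℓ : ℓ ≠ 0) : 0 < netGrowth r ℓ := by
  have : (0 : ℝ) < ℓ := by positivity
  unfold netGrowth; positivity

lemma netGrowth_eq (r : ℝ) {ℓ : ℕ} (hℓ : ℓ ≠ 0) :
    netGrowth r ℓ = r ^ ℓ * (ℓ : ℝ) ^ (2 * ℓ - 1) := by
  have : (ℓ : ℝ) ≠ 0 := by exact_mod_cast hℓ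
  rw [netGrowth, pow_sub₀ _ this (by omega), pow_one]
  ring

lemma choose_mul_netGrowth_mul_le (hr : 0 < r) {j n : ℕ} (hj : j ≠ 0) (hjn : j ≤ n) :
    n.choose j * netGrowth r j * (r * n) ^ (n - j) ≤ netGrowth r n := by
  obtain ⟨k, rfl⟩ := Nat.exists_eq_add_of_le hjn
  rw [Nat.add_sub_cancel_left, netGrowth_eq r hj, netGrowth_eq r (by omega)]
  have hchoose : ((j + k).choose j : ℝ) ≤ ((j + k : ℕ) : ℝ) ^ k := by
    rw [Nat.choose_symm_add]; exact_mod_cast Nat.choose_le_pow _ _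
  have hjle : (j : ℝ) ≤ (j + k : ℕ) := by exact_mod_cast Nat.le_add_right j k
  calc ((j + k).choose j : ℝ) * (r ^ j * (j : ℝ) ^ (2 * j - 1)) * (r * (j + k : ℕ)) ^ k
      ≤ ((j + k : ℕ) : ℝ) ^ k * (r ^ j * ((j + k : ℕ) : ℝ) ^ (2 * j - 1)) *
          (r * (j + k : ℕ)) ^ k := by gcongr
    _ = r ^ (j + k) * ((j + k : ℕ) : ℝ) ^ (2 * (j + k) - 1) := by
        rw [show 2 * (j + k) - 1 = (2 * j - 1) + k + k by omega]; ring

lemma sum_choose_mul_netGrowth_le (hr : 0 < r) {n : ℕ} (hn : 2 ≤ r * n) :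
    ∑ j ∈ Ico 1 n, n.choose j * netGrowth r j ≤ 2 / (r * n) * netGrowth r n := by
  set q := (r * n)⁻¹ with hq_def
  have hq0 : 0 ≤ q := by positivity
  have hq : q ≤ 1 / 2 := by rw [hq_def, one_div]; exact inv_anti₀ two_pos hn
  have hgeom : q / (1 - q) ≤ 2 * q := by rw [div_le_iff₀ (by linarith)]; nlinarith
  calc ∑ j ∈ Ico 1 n, n.choose j * netGrowth r j
      ≤ ∑ j ∈ Ico 1 n, q ^ (n - j) * netGrowth r n := by
        refine sum_le_sum fun j hj => ?_
        have hj := mem_Ico.mp hj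
        rw [hq_def, inv_pow, ← div_eq_inv_mul, le_div_iff₀ (by positivity)]
        exact choose_mul_netGrowth_mul_le hr (by omega) hj.2.le
    _ = (∑ k ∈ Ico 1 n, q ^ k) * netGrowth r n := by
        rw [← sum_mul, sum_Ico_reflect (fun k => q ^ k) 1 (Nat.le_succ n),
          Nat.add_sub_cancel_left, Nat.add_sub_cancel]
    _ ≤ q / (1 - q) * netGrowth r n := by
        gcongr
        · exact netGrowth_nonneg hr.le n
        · exact (geom_sum_Ico_le_of_lt_one hq0 (by linarith)).trans_eq (by rw [pow_one])
    _ ≤ 2 / (r * n) * netGrowth r n := by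
        rw [div_eq_mul_inv 2, ← hq_def]
        exact mul_le_mul_of_nonneg_right hgeom (netGrowth_nonneg hr.le n)

lemma tendsto_sum_choose_mul_netGrowth_div (hr : 0 < r) :
    Tendsto (fun n : ℕ => (∑ j ∈ Ico 1 n, n.choose j * netGrowth r j) / netGrowth r n)
      atTop (𝓝 0) := by
  have hlarge : ∀ᶠ n : ℕ in atTop, 2 ≤ r * n :=
    (tendsto_natCast_atTop_atTop.const_mul_atTop hr).eventually_ge_atTop 2
  refine squeeze_zero' (Eventually.of_forall fun n => ?_) ?_
    (tendsto_const_div_atTop_nhds_zero_nat (2 / r))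
  · exact div_nonneg (sum_nonneg fun j _ => mul_nonneg (Nat.cast_nonneg _)
      (netGrowth_nonneg hr.le j)) (netGrowth_nonneg hr.le n)
  · filter_upwards [hlarge] with n hn
    have hn0 : n ≠ 0 := by rintro rfl; norm_num at hn
    rw [div_le_iff₀ (netGrowth_pos hr hn0), div_div]
    exact sum_choose_mul_netGrowth_le hr hn

end netGrowth

lemma tendsto_sum_choose_mul_div_of_tendsto_div {a b : ℕ → ℝ} {L : ℝ}
    (ha : ∀ j, j ≠ 0 → 0 < a j)
    (htail : Tendsto (fun n : ℕ => (∑ j ∈ Ico 1 n, n.choose j * a j) / a n) atTop (𝓝 0))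
    (hb : Tendsto (fun j => b j / a j) atTop (𝓝 L)) :
    Tendsto (fun n : ℕ => (∑ j ∈ Icc 1 n, n.choose j * b j) / a n) atTop (𝓝 L) := by
  obtain ⟨M, hM⟩ : ∃ M, ∀ j, |b j / a j| ≤ M := by
    obtain ⟨M, hM⟩ := hb.abs.bddAbove_range
    exact ⟨M, fun j => hM ⟨j, rfl⟩⟩
  have hterm : ∀ n, ∀ j ∈ Ico 1 n, |(n.choose j : ℝ) * b j| ≤ M * (n.choose j * a j) := by
    intro n j hj
    have haj := ha j (by rw [mem_Ico] at hj; omega)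
    calc |(n.choose j : ℝ) * b j| = |b j / a j| * (n.choose j * a j) := by
          rw [abs_mul, Nat.abs_cast, abs_div, abs_of_pos haj]; field_simp
      _ ≤ M * (n.choose j * a j) := by gcongr; exact hM j
  have hlower : Tendsto (fun n : ℕ => (∑ j ∈ Ico 1 n, n.choose j * b j) / a n) atTop (𝓝 0) := by
    refine squeeze_zero_norm' ?_ (by simpa using htail.const_mul M)
    filter_upwards [eventually_ne_atTop 0] with n hn
    rw [Real.norm_eq_abs, abs_div, abs_of_pos (ha n hn), mul_div_assoc', mul_sum]
    exact div_le_div_of_nonneg_right ((abs_sum_le_sum_abs _ _).trans (sum_le_sum (hterm n)))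
      (ha n hn).le
  have hsplit := hlower.add hb
  rw [zero_add] at hsplit
  refine hsplit.congr' ?_
  filter_upwards [eventually_ne_atTop 0] with n hn
  rw [← Ico_add_one_right_eq_Icc, sum_Ico_succ_top (by omega), Nat.choose_self, Nat.cast_one,
    one_mul, add_div]

lemma sqrt_two_mul_exp (x : ℝ) : √(2 * exp x) = √2 * exp (x / 2) := by
  rw [Real.sqrt_mul zero_le_two, Real.exp_half]

lemma simplicial_div_galled_const :
    √(2 * exp (1 / 2)) / 4 / (√(2 * exp 1 * exp (1 / 4)) / 4) = exp (-(3 / 8)) := by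
  rw [mul_assoc, ← exp_add, sqrt_two_mul_exp, sqrt_two_mul_exp,
    div_div_div_cancel_right₀ four_ne_zero,
    mul_div_mul_left _ _ (Real.sqrt_ne_zero'.mpr zero_lt_two), ← exp_sub]
  norm_num

theorem simplicial_over_galled_limit (GN SN : ℕ → ℝ)
    (hGN : Tendsto (fun ℓ : ℕ => GN ℓ /
        (Real.sqrt (2 * Real.exp 1 * Real.exp (1/4)) / 4 * (ℓ : ℝ)⁻¹ *
          (8 / Real.exp 1 ^ 2) ^ ℓ * (ℓ : ℝ) ^ (2 * ℓ))) atTop (nhds 1))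
    (hSN : Tendsto (fun ℓ : ℕ => SN ℓ /
        (Real.sqrt (2 * Real.exp (1/2)) / 4 * (ℓ : ℝ)⁻¹ *
          (8 / Real.exp 1 ^ 2) ^ ℓ * (ℓ : ℝ) ^ (2 * ℓ))) atTop (nhds 1)) :
    Tendsto (fun n : ℕ =>
        (∑ j ∈ Finset.Icc 1 n, (n.choose j : ℝ) * SN j) /
        (∑ j ∈ Finset.Icc 1 n, (n.choose j : ℝ) * GN j))
      atTop (nhds (Real.exp (-(3/8)))) := by
  have hr : (0 : ℝ) < 8 / exp 1 ^ 2 := by positivity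
  have hsum : ∀ (F : ℕ → ℝ) {c : ℝ}, c ≠ 0 →
      Tendsto (fun ℓ : ℕ => F ℓ / (c * (ℓ : ℝ)⁻¹ * (8 / exp 1 ^ 2) ^ ℓ * (ℓ : ℝ) ^ (2 * ℓ)))
        atTop (𝓝 1) →
      Tendsto (fun n : ℕ => (∑ j ∈ Icc 1 n, n.choose j * F j) / netGrowth (8 / exp 1 ^ 2) n)
        atTop (𝓝 c) := by
    intro F c hc hF
    refine tendsto_sum_choose_mul_div_of_tendsto_div (fun j hj => netGrowth_pos hr hj)
      (tendsto_sum_choose_mul_netGrowth_div hr) ?_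
    have hc' := hF.const_mul c
    rw [mul_one] at hc'
    refine hc'.congr fun ℓ => ?_
    simp only [netGrowth, mul_assoc]
    rw [mul_div_assoc', mul_div_mul_left _ _ hc]
  have hG := hsum GN (by positivity) hGN
  have hS := hsum SN (by positivity) hSN
  refine (simplicial_div_galled_const ▸ hS.div hG (by positivity)).congr' ?_
  filter_upwards [eventually_ne_atTop 0] with n hn
  exact div_div_div_cancel_right₀ (netGrowth_pos hr hn).ne' _ _
end

section
/- If a_ℓ ~ A·ℓ^{-1}·(8/e²)^ℓ·ℓ^{2ℓ} as ℓ → ∞ for a positive constant A, then S_n := ∑_{j=1}^{n} C(n,j)·a_j satisfies S_n ~ a_n as n → ∞; that is, the summand with j = n dominates the sum. -/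
/-! Write `w c ℓ = ℓ⁻¹ c^ℓ ℓ^{2ℓ}`. From `C(n,j) ≤ n^{n-j}` and `j^{2j-1} ≤ n^{2j-1}` one gets
`C(n,j) w c j ≤ w c n · (c n)^{-(n-j)}`, so the summands with `j < n` add up to at most a
geometric series times `w c n`, which is `O(w c n / n)`. Since `a ~ A · w c` and `w c ℓ > 0` for
`ℓ ≥ 1`, the bound `|a j| ≤ K · w c j` holds for *all* `j ≥ 1`, not just eventually, and this
transfers the estimate from `w c` to `a`. -/

open Filter Real Asymptotics Finset

noncomputable def powSelfWeight (c : ℝ) (ℓ : ℕ) : ℝ := (ℓ : ℝ)⁻¹ * c ^ ℓ * (ℓ : ℝ) ^ (2 * ℓ)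

lemma inv_mul_pow_le_inv_mul_pow {x y : ℝ} {m : ℕ} (hx : 0 < x) (hxy : x ≤ y) (hm : m ≠ 0) :
    x⁻¹ * x ^ m ≤ y⁻¹ * y ^ m := by
  have hpow (z : ℝ) (hz : z ≠ 0) : z⁻¹ * z ^ m = z ^ (m - 1) := by
    rw [pow_sub₀ z hz (Nat.one_le_iff_ne_zero.2 hm), pow_one, mul_comm]
  rw [hpow x hx.ne', hpow y (hx.trans_le hxy).ne']
  gcongr

lemma isBigO_sum_choose_mul {f g : ℕ → ℝ} (hfg : f =O[atTop] g) (hg : ∀ j, 0 < j → g j ≠ 0) :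
    (fun n => ∑ j ∈ Ico 1 n, (n.choose j : ℝ) * f j) =O[atTop]
      fun n => ∑ j ∈ Ico 1 n, (n.choose j : ℝ) * ‖g j‖ := by
  obtain ⟨C, -, hC⟩ := bound_of_isBigO_cofinite (Nat.cofinite_eq_atTop ▸ hfg)
  refine IsBigO.of_bound C (Eventually.of_forall fun n => ?_)
  rw [Real.norm_of_nonneg (sum_nonneg fun j _ => mul_nonneg (Nat.cast_nonneg _) (norm_nonneg _)),
    mul_sum]
  refine (norm_sum_le _ _).trans (sum_le_sum fun j hj => ?_)
  rw [norm_mul, Real.norm_natCast, mul_left_comm]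
  exact mul_le_mul_of_nonneg_left (hC (hg j (mem_Ico.1 hj).1)) (Nat.cast_nonneg _)

lemma sum_Icc_choose_mul_eq_sum_Ico_add (f : ℕ → ℝ) {m n : ℕ} (hmn : m ≤ n) :
    ∑ j ∈ Icc m n, (n.choose j : ℝ) * f j = ∑ j ∈ Ico m n, (n.choose j : ℝ) * f j + f n := by
  rw [← Ico_insert_right hmn, sum_insert right_notMem_Ico, Nat.choose_self, Nat.cast_one,
    one_mul, add_comm]

section

variable {c : ℝ}

lemma powSelfWeight_nonneg (hc : 0 ≤ c) (ℓ : ℕ) : 0 ≤ powSelfWeight c ℓ := by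
  unfold powSelfWeight; positivity

lemma powSelfWeight_pos (hc : 0 < c) {ℓ : ℕ} (hℓ : 0 < ℓ) : 0 < powSelfWeight c ℓ := by
  unfold powSelfWeight; positivity

lemma choose_mul_powSelfWeight_le (hc : 0 < c) {j n : ℕ} (hjn : j ≤ n) :
    (n.choose j : ℝ) * powSelfWeight c j ≤ powSelfWeight c n * ((c * n)⁻¹) ^ (n - j) := by
  obtain ⟨k, rfl⟩ := Nat.exists_eq_add_of_le hjn
  rcases Nat.eq_zero_or_pos j with rfl | hj
  · simp only [powSelfWeight, CharP.cast_eq_zero, inv_zero, zero_mul, mul_zero]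
    exact mul_nonneg (powSelfWeight_nonneg hc.le _) (by positivity)
  have hn : ((j + k : ℕ) : ℝ) ≠ 0 := by positivity
  have hRHS : powSelfWeight c (j + k) * ((c * (j + k : ℕ))⁻¹) ^ (j + k - j) =
      ((j + k : ℕ) : ℝ) ^ k * c ^ j * (((j + k : ℕ) : ℝ)⁻¹ * ((j + k : ℕ) : ℝ) ^ (2 * j)) := by
    unfold powSelfWeight
    rw [Nat.add_sub_cancel_left, show 2 * (j + k) = 2 * j + k + k by ring, mul_inv, mul_pow,
      inv_pow, inv_pow]
    field_simp
    ring
  have hchoose : ((j + k).choose j : ℝ) ≤ ((j + k : ℕ) : ℝ) ^ k := by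
    rw [Nat.choose_symm_add]
    exact_mod_cast Nat.choose_le_pow _ _
  calc ((j + k).choose j : ℝ) * powSelfWeight c j
      = ((j + k).choose j : ℝ) * c ^ j * ((j : ℝ)⁻¹ * (j : ℝ) ^ (2 * j)) := by
        unfold powSelfWeight; ring
    _ ≤ _ := by
        rw [hRHS]
        gcongr ?_ * _ * ?_
        exact inv_mul_pow_le_inv_mul_pow (by exact_mod_cast hj)
          (by exact_mod_cast Nat.le_add_right j k) (by omega)

lemma sum_choose_mul_powSelfWeight_le (hc : 0 < c) {n : ℕ} (hn : 1 < c * n) :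
    ∑ j ∈ Ico 1 n, (n.choose j : ℝ) * powSelfWeight c j ≤
      powSelfWeight c n * ((c * n)⁻¹ / (1 - (c * n)⁻¹)) := by
  calc ∑ j ∈ Ico 1 n, (n.choose j : ℝ) * powSelfWeight c j
      ≤ ∑ j ∈ Ico 1 n, powSelfWeight c n * ((c * n)⁻¹) ^ (n - j) :=
        sum_le_sum fun j hj => choose_mul_powSelfWeight_le hc (mem_Ico.1 hj).2.le
    _ = powSelfWeight c n * ∑ j ∈ Ico 1 n, ((c * n)⁻¹) ^ j := by
        rw [← mul_sum, sum_Ico_reflect _ _ (Nat.le_succ n), Nat.add_sub_cancel_left,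
          Nat.add_sub_cancel]
    _ ≤ powSelfWeight c n * ((c * n)⁻¹ / (1 - (c * n)⁻¹)) := by
        gcongr
        · exact powSelfWeight_nonneg hc.le n
        · simpa using geom_sum_Ico_le_of_lt_one (m := 1) (n := n) (by positivity)
            (inv_lt_one_of_one_lt₀ hn)

lemma isLittleO_sum_choose_mul_powSelfWeight (hc : 0 < c) :
    (fun n => ∑ j ∈ Ico 1 n, (n.choose j : ℝ) * powSelfWeight c j) =o[atTop]
      powSelfWeight c := by
  have hcn : Tendsto (fun n : ℕ => c * n) atTop atTop :=
    tendsto_natCast_atTop_atTop.const_mul_atTop hc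
  have hx : Tendsto (fun n : ℕ => (c * n)⁻¹) atTop (nhds 0) := tendsto_inv_atTop_zero.comp hcn
  have hε : Tendsto (fun n : ℕ => (c * n)⁻¹ / (1 - (c * n)⁻¹)) atTop (nhds 0) := by
    have := hx.div (tendsto_const_nhds.sub hx) (by norm_num : (1 : ℝ) - 0 ≠ 0)
    rwa [zero_div] at this
  have hbound : (fun n => ∑ j ∈ Ico 1 n, (n.choose j : ℝ) * powSelfWeight c j) =O[atTop]
      fun n => (c * n)⁻¹ / (1 - (c * n)⁻¹) * powSelfWeight c n := by
    refine IsBigO.of_bound' ?_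
    filter_upwards [hcn.eventually_gt_atTop 1] with n hn
    rw [Real.norm_of_nonneg (sum_nonneg fun j _ => mul_nonneg (Nat.cast_nonneg _)
      (powSelfWeight_nonneg hc.le j)), mul_comm]
    exact (sum_choose_mul_powSelfWeight_le hc hn).trans (Real.le_norm_self _)
  simpa using hbound.trans_isLittleO
    (((isLittleO_one_iff (F := ℝ)).2 hε).mul_isBigO (isBigO_refl (powSelfWeight c) atTop))

end

theorem laplace_top_term_dominates (a : ℕ → ℝ) (A : ℝ) (hA : 0 < A)
    (ha : Tendsto (fun ℓ : ℕ => a ℓ /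
        (A * (ℓ : ℝ)⁻¹ * (8 / Real.exp 1 ^ 2) ^ ℓ * (ℓ : ℝ) ^ (2 * ℓ))) atTop (nhds 1)) :
    Tendsto (fun n : ℕ =>
        (∑ j ∈ Finset.Icc 1 n, (n.choose j : ℝ) * a j) / a n) atTop (nhds 1) := by
  set c : ℝ := 8 / Real.exp 1 ^ 2
  have hc : 0 < c := by positivity
  have hequiv : a ~[atTop] fun ℓ => A * powSelfWeight c ℓ := by
    refine isEquivalent_of_tendsto_one (ha.congr fun ℓ => ?_)
    simp only [Pi.div_apply, powSelfWeight, mul_assoc]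
  have ha_ne : ∀ᶠ n in atTop, a n ≠ 0 :=
    (ha.eventually_ne one_ne_zero).mono fun n hn => (div_ne_zero_iff.1 hn).1
  have hlower : (fun n => ∑ j ∈ Ico 1 n, (n.choose j : ℝ) * a j) =o[atTop] a := by
    have hO := isBigO_sum_choose_mul (hequiv.isBigO.trans (isBigO_const_mul_self A _ _))
      fun j hj => (powSelfWeight_pos hc hj).ne'
    simp_rw [Real.norm_of_nonneg (powSelfWeight_nonneg hc.le _)] at hO
    exact hO.trans_isLittleO <| (isLittleO_sum_choose_mul_powSelfWeight hc).trans_isBigO <|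
      (isBigO_self_const_mul hA.ne' _ _).trans hequiv.symm.isBigO
  refine (isEquivalent_iff_tendsto_one ha_ne).1
    ((hlower.add_isEquivalent IsEquivalent.refl).congr_left ?_)
  filter_upwards [eventually_gt_atTop 0] with n hn
  exact (sum_Icc_choose_mul_eq_sum_Ico_add a hn).symm
end

section
/- If N is a normal network that is not a phylogenetic tree, then there exists a 2-element subset {u, ũ} of its leaves such that the restriction N|{u, ũ} is not a normal network. Consequently, the largest closed subclass of the class of normal networks is the class of phylogenetic trees. -/
open scoped Classical

/- A binary phylogenetic network, encoded as a finite directed (multi)graph on a subset of ℕ.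
Leaves are identified with their labels.  The multiset of edges allows parallel edges to
arise (temporarily) during the suppression process that defines leaf restriction. -/
structure PhyloNet where
  verts : Finset ℕ
  edges : Multiset (ℕ × ℕ)
  root : ℕ

namespace PhyloNet

noncomputable def outdeg (N : PhyloNet) (v : ℕ) : ℕ :=
  (N.edges.filter fun e => e.1 = v).card

noncomputable def indeg (N : PhyloNet) (v : ℕ) : ℕ :=
  (N.edges.filter fun e => e.2 = v).card

/-- The set of leaves (vertices of out-degree 0). -/
noncomputable def leaves (N : PhyloNet) : Finset ℕ :=
  N.verts.filter fun v => N.outdeg v = 0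

/-- A (directed) walk, given as its list of successive vertices. -/
def IsWalk (N : PhyloNet) (l : List ℕ) : Prop :=
  l ≠ [] ∧ l.Chain' fun a b => (a, b) ∈ N.edges

def IsWalkFromTo (N : PhyloNet) (u v : ℕ) (l : List ℕ) : Prop :=
  N.IsWalk l ∧ l.head? = some u ∧ l.getLast? = some v

def Reaches (N : PhyloNet) (u v : ℕ) : Prop :=
  ∃ l, N.IsWalkFromTo u v l

/-- Binary phylogenetic network: a simple DAG whose root (top of the ancestral root edge)
has in-degree 0 and out-degree 1, every other non-leaf vertex is a tree vertex
(in-degree 1, out-degree 2) or a reticulation (in-degree 2, out-degree 1), every leaf has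
in-degree 1, and every vertex is reachable from the root. -/
def IsPhyloNetwork (N : PhyloNet) : Prop :=
  N.root ∈ N.verts ∧
  (∀ e ∈ N.edges, e.1 ∈ N.verts ∧ e.2 ∈ N.verts ∧ e.1 ≠ e.2) ∧
  N.edges.Nodup ∧
  (∀ v, ¬ ∃ l, N.IsWalkFromTo v v l ∧ 2 ≤ l.length) ∧
  N.indeg N.root = 0 ∧ N.outdeg N.root = 1 ∧
  (∀ v ∈ N.verts, v ≠ N.root → N.outdeg v ≠ 0 →
    (N.indeg v = 1 ∧ N.outdeg v = 2) ∨ (N.indeg v = 2 ∧ N.outdeg v = 1)) ∧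
  (∀ v ∈ N.verts, N.outdeg v = 0 → N.indeg v = 1) ∧
  (∀ v ∈ N.verts, N.Reaches N.root v)

def IsReticulation (N : PhyloNet) (v : ℕ) : Prop :=
  v ∈ N.verts ∧ N.indeg v = 2

/-- Tree-child: every non-leaf vertex has a child that is not a reticulation. -/
def IsTreeChild (N : PhyloNet) : Prop :=
  ∀ v ∈ N.verts, N.outdeg v ≠ 0 → ∃ e ∈ N.edges, e.1 = v ∧ N.indeg e.2 ≤ 1

/-- A reticulation cycle (gall): two distinct internally-disjoint directed paths from a
common top tree vertex s to a common bottom reticulation t. -/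
def IsGall (N : PhyloNet) (s t : ℕ) (p q : List ℕ) : Prop :=
  N.IsWalkFromTo s t p ∧ N.IsWalkFromTo s t q ∧ p.Nodup ∧ q.Nodup ∧
  2 ≤ p.length ∧ 2 ≤ q.length ∧ p ≠ q ∧ N.IsReticulation t ∧
  (∀ x, x ∈ p → x ∈ q → x = s ∨ x = t)

/-- The edges of a walk. -/
def walkEdges (l : List ℕ) : Finset (ℕ × ℕ) :=
  (l.zip l.tail).toFinset

def gallEdges (p q : List ℕ) : Finset (ℕ × ℕ) :=
  walkEdges p ∪ walkEdges q

/-- Galled network: every reticulation lies in exactly one reticulation cycle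
(uniqueness up to the edge set of the cycle). -/
def IsGalled (N : PhyloNet) : Prop :=
  ∀ r, N.IsReticulation r →
    ∃ s t p q, N.IsGall s t p q ∧ (r ∈ p ∨ r ∈ q) ∧
      ∀ s' t' p' q', N.IsGall s' t' p' q' → (r ∈ p' ∨ r ∈ q') →
        gallEdges p' q' = gallEdges p q

/-- Galled tree: a galled network whose reticulation cycles are edge-disjoint. -/
def IsGalledTree (N : PhyloNet) : Prop :=
  N.IsGalled ∧
  ∀ s t p q s' t' p' q', N.IsGall s t p q → N.IsGall s' t' p' q' →
    gallEdges p q ≠ gallEdges p' q' → Disjoint (gallEdges p q) (gallEdges p' q')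

/-- The subgraph of all vertices and edges lying on some path from the root to a leaf
in Y (equivalently, vertices from which some member of Y is reachable). -/
noncomputable def inducedOn (N : PhyloNet) (Y : Finset ℕ) : PhyloNet where
  verts := N.verts.filter fun v => ∃ y ∈ Y, N.Reaches v y
  edges := N.edges.filter fun e =>
    (e.1 ∈ N.verts.filter fun v => ∃ y ∈ Y, N.Reaches v y) ∧
    (e.2 ∈ N.verts.filter fun v => ∃ y ∈ Y, N.Reaches v y)
  root := N.root

/-- One simplification step: suppress a non-root vertex of in-degree 1 and out-degree 1,
or collapse a double edge. -/
def Step (N M : PhyloNet) : Prop :=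
  (∃ u v w, v ∈ N.verts ∧ v ≠ N.root ∧ N.indeg v = 1 ∧ N.outdeg v = 1 ∧
      (u, v) ∈ N.edges ∧ (v, w) ∈ N.edges ∧
      M.verts = N.verts.erase v ∧ M.root = N.root ∧
      M.edges = (u, w) ::ₘ ((N.edges.erase (u, v)).erase (v, w))) ∨
  (∃ u w, 2 ≤ Multiset.count (u, w) N.edges ∧
      M.verts = N.verts ∧ M.root = N.root ∧ M.edges = N.edges.erase (u, w))

def IsReduced (N : PhyloNet) : Prop := ∀ M, ¬ Step N M

/-- `M` is the restriction `N|Y`: the result of repeatedly suppressing degree-(1,1)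
vertices and double edges in the subgraph of N above Y, until none remain. -/
noncomputable def IsRestriction (N : PhyloNet) (Y : Finset ℕ) (M : PhyloNet) : Prop :=
  Relation.ReflTransGen Step (N.inducedOn Y) M ∧ IsReduced M

end PhyloNet

namespace PhyloNet

/-- A phylogenetic tree: a network with no reticulations. -/
def IsTree (N : PhyloNet) : Prop := ∀ v, N.indeg v ≤ 1

/-- A shortcut: an edge (u,v) such that there is another directed path from u to v. -/
def HasShortcut (N : PhyloNet) : Prop :=
  ∃ e ∈ N.edges, ∃ l, N.IsWalkFromTo e.1 e.2 l ∧ 3 ≤ l.length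

/-- Normal network: tree-child with no shortcut. -/
def IsNormal (N : PhyloNet) : Prop := N.IsTreeChild ∧ ¬ N.HasShortcut

end PhyloNet

open PhyloNet

/-!
Let `r` be a reticulation, `p` a parent of `r`, `c` a tree child of `p`, `u` a leaf reached from a
tree child of `r` through tree vertices only, and `u'` a leaf below `c`. As `p → r` is not a
shortcut, `c` does not reach `r`; nor does `r` reach `c`, for it would then reach the unique
parent `p` of `c`. Vertices on a tree path have unique parents, so every ancestor of `u` is
comparable with `r`, and therefore `u ≠ u'`.

Every reduction step computing `N|{u, u'}` keeps `r` a reticulation with `p` as a parent, and keeps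
a second child of `p` from which `r` is unreachable; since `p` has out-degree at most two, the two
in-edges of `r` can never become parallel. So in `N|{u, u'}` the reticulation `r` has two distinct
parents `a`, `b`. If `N|{u, u'}` were normal, tree paths from tree children of `r`, `a` and `b`
would end at leaves; two of these three leaves coincide, making the corresponding children
comparable, and each such comparability produces a shortcut or a cycle.
-/

open Relation

namespace Multiset

variable {α : Type*} [DecidableEq α]

lemma count_le_countP (s : Multiset α) {p : α → Prop} [DecidablePred p] {a : α} (hpa : p a) :
    s.count a ≤ s.countP p := by
  rw [count, countP_eq_card_filter, countP_eq_card_filter]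
  exact card_le_card (monotone_filter_right s fun x (hx : a = x) => hx ▸ hpa)

lemma count_add_one_le_countP {s : Multiset α} {p : α → Prop} [DecidablePred p] {a b : α}
    (hpa : p a) (hb : b ∈ s) (hpb : p b) (hba : b ≠ a) : s.count a + 1 ≤ s.countP p := by
  rw [← cons_erase hb, countP_cons_of_pos _ hpb, count_cons_of_ne hba.symm]
  exact Nat.succ_le_succ (count_le_countP _ hpa)

lemma countP_cons_erase_erase {s : Multiset α} {a b : α} (ha : a ∈ s) (hb : b ∈ s) (hab : a ≠ b)
    (c : α) (p : α → Prop) [DecidablePred p] :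
    (c ::ₘ (s.erase a).erase b).countP p + (if p a then 1 else 0) + (if p b then 1 else 0) =
      s.countP p + (if p c then 1 else 0) := by
  have hb' : b ∈ s.erase a := (mem_erase_of_ne hab.symm).2 hb
  conv_rhs => rw [← cons_erase ha, ← cons_erase hb']
  simp only [countP_cons]
  omega

lemma countP_erase_add {s : Multiset α} {a : α} (ha : a ∈ s) (p : α → Prop) [DecidablePred p] :
    (s.erase a).countP p + (if p a then 1 else 0) = s.countP p := by
  conv_rhs => rw [← cons_erase ha, countP_cons]

end Multiset

namespace PhyloNet

abbrev Adj (G : PhyloNet) (a b : ℕ) : Prop := (a, b) ∈ G.edges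

variable {G G' : PhyloNet} {a b c t v : ℕ}

lemma outdeg_eq_countP (G : PhyloNet) (v : ℕ) :
    G.outdeg v = G.edges.countP fun e => e.1 = v :=
  (Multiset.countP_eq_card_filter _ _).symm

lemma indeg_eq_countP (G : PhyloNet) (v : ℕ) :
    G.indeg v = G.edges.countP fun e => e.2 = v :=
  (Multiset.countP_eq_card_filter _ _).symm

lemma count_add_one_le_outdeg (h : G.Adj v b) (hba : b ≠ a) :
    G.edges.count (v, a) + 1 ≤ G.outdeg v := by
  rw [outdeg_eq_countP]
  exact Multiset.count_add_one_le_countP rfl h rfl fun he => hba (congrArg Prod.snd he)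

lemma count_add_one_le_indeg (h : G.Adj b v) (hba : b ≠ a) :
    G.edges.count (a, v) + 1 ≤ G.indeg v := by
  rw [indeg_eq_countP]
  exact Multiset.count_add_one_le_countP rfl h rfl fun he => hba (congrArg Prod.fst he)

lemma outdeg_pos_of_adj (h : G.Adj a b) : 0 < G.outdeg a := by
  rw [outdeg_eq_countP]
  exact Multiset.countP_pos_of_mem h rfl

lemma indeg_pos_of_adj (h : G.Adj a b) : 0 < G.indeg b := by
  rw [indeg_eq_countP]
  exact Multiset.countP_pos_of_mem h rfl

lemma exists_adj_of_outdeg_ne_zero (h : G.outdeg v ≠ 0) : ∃ b, G.Adj v b := by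
  rw [outdeg_eq_countP, ← Nat.pos_iff_ne_zero, Multiset.countP_pos] at h
  obtain ⟨e, he, rfl⟩ := h
  exact ⟨e.2, he⟩

lemma exists_adj_of_indeg_ne_zero (h : G.indeg v ≠ 0) : ∃ a, G.Adj a v := by
  rw [indeg_eq_countP, ← Nat.pos_iff_ne_zero, Multiset.countP_pos] at h
  obtain ⟨e, he, rfl⟩ := h
  exact ⟨e.1, he⟩

lemma eq_of_adj_of_indeg_le_one (hv : G.indeg v ≤ 1) (ha : G.Adj a v) (hb : G.Adj b v) :
    a = b := by
  by_contra hab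
  have := count_add_one_le_indeg hb (Ne.symm hab)
  have := Multiset.count_pos.2 ha
  omega

lemma exists_ne_adj_of_two_le_indeg (hv : 2 ≤ G.indeg v)
    (hsimple : ∀ e, G.edges.count e ≤ 1) : ∃ a b, a ≠ b ∧ G.Adj a v ∧ G.Adj b v := by
  obtain ⟨a, ha⟩ := exists_adj_of_indeg_ne_zero (by omega : G.indeg v ≠ 0)
  by_contra! h
  have : G.indeg v = G.edges.count (a, v) := by
    rw [Multiset.count_eq_card_filter_eq]
    refine congrArg Multiset.card (Multiset.filter_congr fun e he => ?_)
    constructor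
    · intro hev
      have hea : e.1 = a := by
        by_contra hne
        exact h _ _ hne (by rwa [← hev]) ha
      exact Prod.ext hea.symm hev.symm
    · rintro rfl
      rfl
  have := hsimple (a, v)
  omega

lemma exists_walk_cons (h : ReflTransGen G.Adj a b) : ∃ l, G.IsWalkFromTo a b (a :: l) := by
  obtain ⟨l, hl, hlast⟩ := List.exists_isChain_cons_of_relationReflTransGen h
  exact ⟨l, ⟨List.cons_ne_nil _ _, hl⟩, rfl,
    by rw [List.getLast?_eq_some_getLast (List.cons_ne_nil _ _), hlast]⟩

lemma reaches_iff : G.Reaches a b ↔ ReflTransGen G.Adj a b := by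
  refine ⟨fun ⟨l, ⟨hne, hl⟩, hhead, hlast⟩ => ?_, fun h => ?_⟩
  have := List.relationReflTransGen_of_exists_isChain l hl hne
  rwa [(List.head_eq_iff_head?_eq_some hne).2 hhead,
    (List.getLast_eq_iff_getLast?_eq_some hne).2 hlast] at this
  obtain ⟨l, hl⟩ := exists_walk_cons h
  exact ⟨_, hl⟩

lemma IsWalkFromTo.cons {l : List ℕ} (h : G.Adj a b) (hw : G.IsWalkFromTo b c (b :: l)) :
    G.IsWalkFromTo a c (a :: b :: l) :=
  ⟨⟨List.cons_ne_nil _ _, hw.1.2.cons_cons h⟩, rfl, by rw [List.getLast?_cons_cons]; exact hw.2.2⟩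

lemma hasShortcut_of_reflTransGen (hab : G.Adj a b) (hac : G.Adj a c)
    (hcb : ReflTransGen G.Adj c b) (hne : c ≠ b) : G.HasShortcut := by
  obtain ⟨d, hcd, hdb⟩ := hcb.cases_head.resolve_left hne
  obtain ⟨l, hl⟩ := exists_walk_cons hdb
  exact ⟨(a, b), hab, a :: c :: d :: l, (hl.cons hcd).cons hac, by simp⟩

structure IsDag (G : PhyloNet) : Prop where
  mem_verts : ∀ ⦃a b⦄, G.Adj a b → a ∈ G.verts ∧ b ∈ G.verts
  acyclic : ∀ a, ¬ TransGen G.Adj a a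

lemma IsDag.ne (hG : G.IsDag) (h : G.Adj a b) : a ≠ b :=
  fun hab => hG.acyclic a (.single (hab ▸ h))

lemma IsDag.not_reflTransGen (hG : G.IsDag) (h : G.Adj a b) : ¬ ReflTransGen G.Adj b a :=
  fun h' => hG.acyclic a (.head' h h')

lemma IsDag.wellFounded (hG : G.IsDag) : WellFounded (flip G.Adj) := by
  let descendants x := G.verts.filter fun z => ReflTransGen G.Adj x z
  refine Subrelation.wf (fun {y x} (hxy : G.Adj x y) => ?_)
    (InvImage.wf (fun x => (descendants x).card) wellFounded_lt)
  refine Finset.card_lt_card ((Finset.ssubset_iff_of_subset fun z hz => ?_).2 ⟨x, ?_, ?_⟩)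
  · rw [Finset.mem_filter] at hz ⊢
    exact ⟨hz.1, .head hxy hz.2⟩
  · exact Finset.mem_filter.2 ⟨(hG.mem_verts hxy).1, .refl⟩
  · exact fun hx => hG.not_reflTransGen hxy (Finset.mem_filter.1 hx).2

lemma IsDag.exists_leaf (hG : G.IsDag) {R : ℕ → ℕ → Prop} (hR : R ≤ G.Adj)
    (hstep : ∀ x ∈ G.verts, G.outdeg x ≠ 0 → ∃ y, R x y) {x : ℕ} (hx : x ∈ G.verts) :
    ∃ l ∈ G.verts, ReflTransGen R x l ∧ G.outdeg l = 0 := by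
  induction x using hG.wellFounded.induction with
  | _ x ih =>
    by_cases h0 : G.outdeg x = 0
    · exact ⟨x, hx, .refl, h0⟩
    obtain ⟨y, hxy⟩ := hstep x hx h0
    obtain ⟨l, hl, hyl, hl0⟩ := ih y (hR _ _ hxy) (hG.mem_verts (hR _ _ hxy)).2
    exact ⟨l, hl, .head hxy hyl, hl0⟩

def TreeAdj (G : PhyloNet) (a b : ℕ) : Prop := G.Adj a b ∧ G.indeg b ≤ 1

lemma IsDag.exists_treePath_leaf (hG : G.IsDag) (htc : G.IsTreeChild) {x : ℕ}
    (hx : x ∈ G.verts) : ∃ l ∈ G.verts, ReflTransGen G.TreeAdj x l ∧ G.outdeg l = 0 :=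
  hG.exists_leaf (fun _ _ h => h.1) (fun x hx h0 =>
    let ⟨e, he, he1, hle⟩ := htc x hx h0
    ⟨e.2, he1 ▸ he, hle⟩) hx

lemma reflTransGen_of_treePath {x y : ℕ} (h : ReflTransGen G.TreeAdj x y) :
    ReflTransGen G.Adj x y :=
  ReflTransGen.mono (fun _ _ h => h.1) _ _ h

lemma reflTransGen_parent {x y p : ℕ} (h : ReflTransGen G.Adj x y) (hxy : x ≠ y)
    (hp : G.Adj p y) (hy : G.indeg y ≤ 1) : ReflTransGen G.Adj x p := by
  obtain ⟨c, hxc, hcy⟩ := h.cases_tail.resolve_left hxy.symm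
  rwa [eq_of_adj_of_indeg_le_one hy hcy hp] at hxc

lemma comparable_of_treePath {x x' y : ℕ} (h : ReflTransGen G.TreeAdj x y)
    (h' : ReflTransGen G.Adj x' y) : ReflTransGen G.Adj x x' ∨ ReflTransGen G.Adj x' x := by
  induction h using ReflTransGen.head_induction_on with
  | refl => exact Or.inr h'
  | @head x c hxc _ ih =>
    rcases ih with hcx' | hx'c
    · exact Or.inl (.head hxc.1 hcx')
    · by_cases hx' : x' = c
      · exact Or.inl (hx' ▸ .single hxc.1)
      · exact Or.inr (reflTransGen_parent hx'c hx' hxc.1 hxc.2)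

lemma Step.verts_subset (hs : Step G G') : G'.verts ⊆ G.verts := by
  rcases hs with ⟨q, v, w, -, -, -, -, -, -, hverts, -, -⟩ | ⟨x, y, -, hverts, -, -⟩
  · rw [hverts]
    exact Finset.erase_subset _ _
  · rw [hverts]

lemma Step.transGen_of_adj (hs : Step G G') (h : G'.Adj a b) : TransGen G.Adj a b := by
  rcases hs with ⟨q, v, w, -, -, -, -, hqv, hvw, -, -, hedges⟩ | ⟨x, y, -, -, -, hedges⟩
  · rw [Adj, hedges, Multiset.mem_cons] at h
    rcases h with h | h
    · obtain ⟨rfl, rfl⟩ := Prod.mk.inj h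
      exact .tail (.single hqv) hvw
    · exact .single (Multiset.mem_of_mem_erase (Multiset.mem_of_mem_erase h))
  · rw [Adj, hedges] at h
    exact .single (Multiset.mem_of_mem_erase h)

lemma Step.reflTransGen_of_reflTransGen (hs : Step G G') (h : ReflTransGen G'.Adj a b) :
    ReflTransGen G.Adj a b :=
  reflTransGen_closed (fun _ _ h => (hs.transGen_of_adj h).to_reflTransGen) _ _ h

lemma Step.adj_of_adj (hs : Step G G') (h : G.Adj a b) (ha : a ∈ G'.verts)
    (hb : b ∈ G'.verts) : G'.Adj a b := by
  rcases hs with ⟨q, v, w, -, -, -, -, -, -, hverts, -, hedges⟩ | ⟨x, y, hxy, -, -, hedges⟩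
  · rw [hverts] at ha hb
    rw [Adj, hedges]
    refine Multiset.mem_cons_of_mem ((Multiset.mem_erase_of_ne ?_).2
      ((Multiset.mem_erase_of_ne ?_).2 h))
    · exact fun e => Finset.ne_of_mem_erase ha (congrArg Prod.fst e)
    · exact fun e => Finset.ne_of_mem_erase hb (congrArg Prod.snd e)
  · rw [Adj, hedges]
    by_cases hab : (a, b) = (x, y)
    · rw [hab, ← Multiset.count_pos, Multiset.count_erase_self]
      omega
    · exact (Multiset.mem_erase_of_ne hab).2 h

lemma Step.bypass_of_notMem (hs : Step G G') (hv : v ∈ G.verts) (hv' : v ∉ G'.verts) :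
    G.indeg v = 1 ∧ G.outdeg v = 1 ∧ ∃ w, G.Adj v w ∧ ∀ q, G.Adj q v → G'.Adj q w := by
  rcases hs with ⟨q, u, w, -, -, hin, hout, hqu, huw, hverts, -, hedges⟩ |
    ⟨x, y, -, hverts, -, -⟩
  · obtain rfl : v = u := by
      by_contra h
      exact hv' (hverts ▸ Finset.mem_erase.2 ⟨h, hv⟩)
    refine ⟨hin, hout, w, huw, fun q' hq' => ?_⟩
    rw [eq_of_adj_of_indeg_le_one hin.le hq' hqu, Adj, hedges]
    exact Multiset.mem_cons_self _ _
  · exact absurd (hverts ▸ hv) hv'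

/-- The two kinds of reduction step, suppressing `v` on a path `q → v → w` or deleting one copy of
a parallel edge `(x, y)`, with their effect on every count of edges. -/
lemma Step.countP_edges (hG : G.IsDag) (hs : Step G G') :
    (∃ q v w, G.indeg v = 1 ∧ G.outdeg v = 1 ∧ G'.verts = G.verts.erase v ∧
      ∀ (p : ℕ × ℕ → Prop) [DecidablePred p],
        G'.edges.countP p + (if p (q, v) then 1 else 0) + (if p (v, w) then 1 else 0) =
          G.edges.countP p + (if p (q, w) then 1 else 0)) ∨
    (∃ x y, 2 ≤ G.edges.count (x, y) ∧ G'.verts = G.verts ∧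
      ∀ (p : ℕ × ℕ → Prop) [DecidablePred p],
        G'.edges.countP p + (if p (x, y) then 1 else 0) = G.edges.countP p) := by
  rcases hs with ⟨q, v, w, -, -, hin, hout, hqv, hvw, hverts, -, hedges⟩ |
    ⟨x, y, hxy, hverts, -, hedges⟩
  · refine Or.inl ⟨q, v, w, hin, hout, hverts, fun p _ => ?_⟩
    rw [hedges]
    exact Multiset.countP_cons_erase_erase hqv hvw
      (fun h => hG.ne hqv (congrArg Prod.fst h)) _ p
  · refine Or.inr ⟨x, y, hxy, hverts, fun p _ => ?_⟩
    rw [hedges]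
    exact Multiset.countP_erase_add (Multiset.count_pos.1 (by omega)) p

lemma Step.outdeg_le (hG : G.IsDag) (hs : Step G G') (t : ℕ) : G'.outdeg t ≤ G.outdeg t := by
  rw [outdeg_eq_countP, outdeg_eq_countP]
  rcases hs.countP_edges hG with ⟨q, v, w, -, -, -, h⟩ | ⟨x, y, -, -, h⟩
  · have := h fun e => e.1 = t
    split_ifs at this <;> omega
  · have := h fun e => e.1 = t
    omega

lemma Step.indeg_eq (hG : G.IsDag) (hs : Step G G') (ht : t ∈ G'.verts)
    (hsimple : ∀ x, G.edges.count (x, t) ≤ 1) : G'.indeg t = G.indeg t := by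
  rw [indeg_eq_countP, indeg_eq_countP]
  rcases hs.countP_edges hG with ⟨q, v, w, -, -, hverts, h⟩ | ⟨x, y, hxy, -, h⟩
  · have htv : v ≠ t := fun hvt => by simp [hverts, hvt] at ht
    have := h fun e => e.2 = t
    simp only [htv, if_false] at this
    omega
  · have hyt : y ≠ t := by
      rintro rfl
      exact absurd (hsimple x) (by omega)
    have := h fun e => e.2 = t
    simp only [hyt, if_false] at this
    omega

lemma Step.isDag (hG : G.IsDag) (hs : Step G G') : G'.IsDag := by
  refine ⟨fun a b hab => ?_, fun a h => hG.acyclic a (TransGen.closed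
    (fun _ _ => hs.transGen_of_adj) _ _ h)⟩
  have hab' := hs.transGen_of_adj hab
  obtain ⟨c, hac, -⟩ := TransGen.head'_iff.1 hab'
  obtain ⟨d, -, hdb⟩ := TransGen.tail'_iff.1 hab'
  have ha := (hG.mem_verts hac).1
  have hb := (hG.mem_verts hdb).2
  rcases hs.countP_edges hG with ⟨q, v, w, hin, hout, hverts, h⟩ | ⟨x, y, -, hverts, -⟩
  · have hout' := h fun e => e.1 = v
    have hin' := h fun e => e.2 = v
    rw [← outdeg_eq_countP, ← outdeg_eq_countP] at hout'
    rw [← indeg_eq_countP, ← indeg_eq_countP] at hin'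
    simp only [if_true] at hout' hin'
    rw [hverts]
    refine ⟨Finset.mem_erase.2 ⟨fun hav => ?_, ha⟩, Finset.mem_erase.2 ⟨fun hbv => ?_, hb⟩⟩
    · have := outdeg_pos_of_adj hab
      rw [hav] at this
      split_ifs at hout' <;> omega
    · have := indeg_pos_of_adj hab
      rw [hbv] at this
      split_ifs at hin' <;> omega
  · rw [hverts]
    exact ⟨ha, hb⟩

lemma Step.outdeg_ne_zero (hG : G.IsDag) (hs : Step G G') (ht : t ∈ G'.verts)
    (h : G.outdeg t ≠ 0) : G'.outdeg t ≠ 0 := by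
  obtain ⟨s, hts⟩ := exists_adj_of_outdeg_ne_zero h
  by_cases hs' : s ∈ G'.verts
  · exact (outdeg_pos_of_adj (hs.adj_of_adj hts ht hs')).ne'
  · obtain ⟨-, -, w, -, hw⟩ := hs.bypass_of_notMem (hG.mem_verts hts).2 hs'
    exact (outdeg_pos_of_adj (hw t hts)).ne'

/-- The reticulation `r` with parent `p`, as seen in a reduction of `N|{u, u'}`. -/
structure ReticulationInv (u u' p r : ℕ) (G : PhyloNet) : Prop where
  isDag : G.IsDag
  leaf_eq : ∀ v ∈ G.verts, G.outdeg v = 0 → v = u ∨ v = u'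
  outdeg_le_two : ∀ v, G.outdeg v ≤ 2
  outdeg_ne_zero : G.outdeg r ≠ 0
  indeg_eq_two : G.indeg r = 2
  adj_p_r : G.Adj p r
  exists_adj_p : ∃ z, G.Adj p z ∧ ¬ ReflTransGen G.Adj z r

variable {u u' p r : ℕ}

lemma ReticulationInv.step (hi : ReticulationInv u u' p r G) (hs : Step G G') :
    ReticulationInv u u' p r G' := by
  have hG := hi.isDag
  obtain ⟨z, hpz, hzr⟩ := hi.exists_adj_p
  have hzr' : z ≠ r := fun h => hzr (h ▸ .refl)
  have hr : r ∈ G'.verts := by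
    by_contra h
    have := (hs.bypass_of_notMem (hG.mem_verts hi.adj_p_r).2 h).1
    rw [hi.indeg_eq_two] at this
    omega
  have hp : p ∈ G'.verts := by
    by_contra h
    have := (hs.bypass_of_notMem (hG.mem_verts hi.adj_p_r).1 h).2.1
    have := count_add_one_le_outdeg hpz hzr'
    have := Multiset.count_pos.2 hi.adj_p_r
    omega
  -- A parallel pair into `r` has to start at `p`, which would then have out-degree 3.
  have hsimple : ∀ x, G.edges.count (x, r) ≤ 1 := by
    intro x
    by_cases hxp : x = p
    · subst hxp
      have := count_add_one_le_outdeg hpz hzr'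
      have := hi.outdeg_le_two x
      omega
    · have := count_add_one_le_indeg hi.adj_p_r (Ne.symm hxp)
      have := hi.indeg_eq_two
      omega
  refine ⟨hs.isDag hG, fun v hv h0 => hi.leaf_eq v (hs.verts_subset hv) ?_,
    fun v => (hs.outdeg_le hG v).trans (hi.outdeg_le_two v),
    hs.outdeg_ne_zero hG hr hi.outdeg_ne_zero,
    (hs.indeg_eq hG hr hsimple).trans hi.indeg_eq_two,
    hs.adj_of_adj hi.adj_p_r hp hr, ?_⟩
  · by_contra h
    exact hs.outdeg_ne_zero hG hv h h0
  · by_cases hz : z ∈ G'.verts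
    · exact ⟨z, hs.adj_of_adj hpz hp hz, fun h => hzr (hs.reflTransGen_of_reflTransGen h)⟩
    · obtain ⟨-, -, w, hzw, hw⟩ := hs.bypass_of_notMem (hG.mem_verts hpz).2 hz
      exact ⟨w, hw p hpz, fun h => hzr (.head hzw (hs.reflTransGen_of_reflTransGen h))⟩

lemma ReticulationInv.of_reflTransGen (hi : ReticulationInv u u' p r G)
    (h : ReflTransGen Step G G') : ReticulationInv u u' p r G' := by
  induction h with
  | refl => exact hi
  | tail _ hs ih => exact ih.step hs

lemma IsReduced.count_le_one (h : G.IsReduced) (e : ℕ × ℕ) : G.edges.count e ≤ 1 := by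
  by_contra he
  exact h ⟨G.verts, G.edges.erase e, G.root⟩
    (Or.inr ⟨e.1, e.2, by rw [Prod.mk.eta]; omega, rfl, rfl, rfl⟩)

lemma IsDag.exists_treeChild_treePath_leaf (hG : G.IsDag) (htc : G.IsTreeChild) {x : ℕ}
    (hx : x ∈ G.verts) (h0 : G.outdeg x ≠ 0) :
    ∃ c, G.TreeAdj x c ∧ ∃ l ∈ G.verts, ReflTransGen G.TreeAdj c l ∧ G.outdeg l = 0 := by
  obtain ⟨e, he, rfl, hle⟩ := htc x hx h0
  exact ⟨e.2, ⟨he, hle⟩, hG.exists_treePath_leaf htc (hG.mem_verts he).2⟩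

lemma IsDag.not_comparable_sibling_child (hG : G.IsDag) (hns : ¬ G.HasShortcut) {x c d : ℕ}
    (hxr : G.Adj x r) (hxc : G.Adj x c) (hc : G.indeg c ≤ 1) (hcr : c ≠ r)
    (hrd : G.Adj r d) (hd : G.indeg d ≤ 1) :
    ¬ (ReflTransGen G.Adj d c ∨ ReflTransGen G.Adj c d) := by
  rintro (h | h)
  · by_cases hdc : d = c
    · subst hdc
      exact hG.ne hxr (eq_of_adj_of_indeg_le_one hd hrd hxc).symm
    · exact hG.not_reflTransGen hrd ((reflTransGen_parent h hdc hxc hc).tail hxr)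
  · by_cases hcd : c = d
    · subst hcd
      exact hG.ne hxr (eq_of_adj_of_indeg_le_one hc hrd hxc).symm
    · exact hns (hasShortcut_of_reflTransGen hxr hxc (reflTransGen_parent h hcd hrd hd) hcr)

lemma not_reflTransGen_of_ne_parents (hns : ¬ G.HasShortcut) {a b ca cb : ℕ} (hab : a ≠ b)
    (har : G.Adj a r) (hbr : G.Adj b r) (haca : G.Adj a ca) (hbcb : G.Adj b cb)
    (hcb : G.indeg cb ≤ 1) (hcar : ca ≠ r) : ¬ ReflTransGen G.Adj ca cb := by
  intro h
  have hne : ca ≠ cb := fun e => hab (eq_of_adj_of_indeg_le_one hcb (e ▸ haca) hbcb)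
  exact hns (hasShortcut_of_reflTransGen har haca ((reflTransGen_parent h hne hbcb hcb).tail hbr)
    hcar)

lemma ReticulationInv.not_isNormal (hi : ReticulationInv u u' p r G) (hred : G.IsReduced) :
    ¬ G.IsNormal := by
  rintro ⟨htc, hns⟩
  have hG := hi.isDag
  have hr := (hG.mem_verts hi.adj_p_r).2
  obtain ⟨a, b, hab, har, hbr⟩ :=
    exists_ne_adj_of_two_le_indeg hi.indeg_eq_two.ge hred.count_le_one
  have below : ∀ {x}, G.Adj x r →
      ∃ c, G.TreeAdj x c ∧ c ≠ r ∧ ∃ l, (l = u ∨ l = u') ∧ ReflTransGen G.TreeAdj c l := by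
    intro x hxr
    obtain ⟨c, hxc, l, hl, hcl, hl0⟩ := hG.exists_treeChild_treePath_leaf htc
      (hG.mem_verts hxr).1 (outdeg_pos_of_adj hxr).ne'
    refine ⟨c, hxc, fun hcr => ?_, l, hi.leaf_eq l hl hl0, hcl⟩
    have := hxc.2
    rw [hcr, hi.indeg_eq_two] at this
    omega
  obtain ⟨d, ⟨hrd, hd⟩, l, hl, hdl, hl0⟩ :=
    hG.exists_treeChild_treePath_leaf htc hr hi.outdeg_ne_zero
  obtain ⟨ca, ⟨haca, hca⟩, hcar, la, hla, hcala⟩ := below har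
  obtain ⟨cb, ⟨hbcb, hcb⟩, hcbr, lb, hlb, hcblb⟩ := below hbr
  have hla' : l ≠ la := fun h => hG.not_comparable_sibling_child hns har haca hca hcar hrd hd
    (comparable_of_treePath hdl (h ▸ reflTransGen_of_treePath hcala))
  have hlb' : l ≠ lb := fun h => hG.not_comparable_sibling_child hns hbr hbcb hcb hcbr hrd hd
    (comparable_of_treePath hdl (h ▸ reflTransGen_of_treePath hcblb))
  have hlab : la = lb := by
    rcases hi.leaf_eq l hl hl0 with rfl | rfl <;> grind
  rcases comparable_of_treePath hcala (hlab ▸ reflTransGen_of_treePath hcblb) with h | h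
  · exact not_reflTransGen_of_ne_parents hns hab har hbr haca hbcb hcb hcar h
  · exact not_reflTransGen_of_ne_parents hns hab.symm hbr har hbcb haca hca hcbr h

section Network

variable {N : PhyloNet} {Y : Finset ℕ}

lemma IsPhyloNetwork.isDag (hN : N.IsPhyloNetwork) : N.IsDag := by
  obtain ⟨-, hends, -, hcycle, -⟩ := hN
  refine ⟨fun a b h => ⟨(hends _ h).1, (hends _ h).2.1⟩, fun a h => hcycle a ?_⟩
  obtain ⟨c, hac, hca⟩ := TransGen.head'_iff.1 h
  obtain ⟨l, hl⟩ := exists_walk_cons hca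
  exact ⟨a :: c :: l, hl.cons hac, by simp⟩

lemma IsPhyloNetwork.outdeg_le_two (hN : N.IsPhyloNetwork) (v : ℕ) : N.outdeg v ≤ 2 := by
  obtain ⟨-, hends, -, -, -, hroot, hdeg, -⟩ := hN
  by_cases h0 : N.outdeg v = 0
  · omega
  by_cases hv : v = N.root
  · rw [hv, hroot]
    omega
  obtain ⟨w, hvw⟩ := exists_adj_of_outdeg_ne_zero h0
  rcases hdeg v (hends _ hvw).1 hv h0 with h | h <;> omega

lemma IsPhyloNetwork.indeg_eq_two_and_outdeg_ne_zero (hN : N.IsPhyloNetwork)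
    (hv : 2 ≤ N.indeg v) : N.indeg v = 2 ∧ N.outdeg v ≠ 0 := by
  obtain ⟨-, hends, -, -, hroot, -, hdeg, hleaf, -⟩ := hN
  obtain ⟨a, hav⟩ := exists_adj_of_indeg_ne_zero (by omega : N.indeg v ≠ 0)
  have hvV := (hends _ hav).2.1
  have h0 : N.outdeg v ≠ 0 := fun h0 => by
    have := hleaf v hvV h0
    omega
  have hvr : v ≠ N.root := by
    rintro rfl
    omega
  rcases hdeg v hvV hvr h0 with h | h
  · omega
  · exact ⟨h.1, h0⟩

lemma mem_inducedOn_verts :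
    v ∈ (N.inducedOn Y).verts ↔ v ∈ N.verts ∧ ∃ y ∈ Y, ReflTransGen N.Adj v y := by
  simp only [inducedOn, Finset.mem_filter, reaches_iff]

lemma adj_inducedOn_iff :
    (N.inducedOn Y).Adj a b ↔
      N.Adj a b ∧ a ∈ (N.inducedOn Y).verts ∧ b ∈ (N.inducedOn Y).verts :=
  Multiset.mem_filter

lemma IsDag.adj_inducedOn (hN : N.IsDag) (h : N.Adj a b) (hb : b ∈ (N.inducedOn Y).verts) :
    (N.inducedOn Y).Adj a b := by
  obtain ⟨-, y, hy, hby⟩ := mem_inducedOn_verts.1 hb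
  exact adj_inducedOn_iff.2
    ⟨h, mem_inducedOn_verts.2 ⟨(hN.mem_verts h).1, y, hy, .head h hby⟩, hb⟩

lemma reflTransGen_of_inducedOn (h : ReflTransGen (N.inducedOn Y).Adj a b) :
    ReflTransGen N.Adj a b :=
  ReflTransGen.mono (fun _ _ h => (adj_inducedOn_iff.1 h).1) _ _ h

lemma IsDag.inducedOn (hN : N.IsDag) : (N.inducedOn Y).IsDag :=
  ⟨fun _ _ h => (adj_inducedOn_iff.1 h).2,
    fun a h => hN.acyclic a (TransGen.mono (fun _ _ h => (adj_inducedOn_iff.1 h).1) _ _ h)⟩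

lemma IsDag.indeg_inducedOn (hN : N.IsDag) (hv : v ∈ (N.inducedOn Y).verts) :
    (N.inducedOn Y).indeg v = N.indeg v := by
  rw [indeg_eq_countP, indeg_eq_countP]
  refine (Multiset.countP_filter _ _ _).trans (Multiset.countP_congr rfl fun e he => ?_)
  refine propext ⟨And.left, fun hev => ⟨hev, ?_⟩⟩
  exact (Multiset.mem_filter.1 (hN.adj_inducedOn he (hev ▸ hv))).2

lemma outdeg_inducedOn_le : (N.inducedOn Y).outdeg v ≤ N.outdeg v := by
  rw [outdeg_eq_countP, outdeg_eq_countP]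
  exact Multiset.countP_le_of_le _ (Multiset.filter_le _ _)

lemma IsDag.mem_of_outdeg_inducedOn_eq_zero (hN : N.IsDag) (hv : v ∈ (N.inducedOn Y).verts)
    (h0 : (N.inducedOn Y).outdeg v = 0) : v ∈ Y := by
  obtain ⟨-, y, hy, hvy⟩ := mem_inducedOn_verts.1 hv
  rcases hvy.cases_head with rfl | ⟨s, hvs, hsy⟩
  · exact hy
  · have hs : s ∈ (N.inducedOn Y).verts :=
      mem_inducedOn_verts.2 ⟨(hN.mem_verts hvs).2, y, hy, hsy⟩
    exact absurd h0 (outdeg_pos_of_adj (hN.adj_inducedOn hvs hs)).ne'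

lemma IsPhyloNetwork.reticulationInv_inducedOn (hN : N.IsPhyloNetwork) {c : ℕ}
    (hr : 2 ≤ N.indeg r) (hpr : N.Adj p r) (hpc : N.Adj p c) (hcr : ¬ ReflTransGen N.Adj c r)
    (hru : TransGen N.Adj r u) (hcu' : ReflTransGen N.Adj c u') :
    ReticulationInv u u' p r (N.inducedOn {u, u'}) := by
  have hG := hN.isDag
  obtain ⟨d, hrd, hdu⟩ := TransGen.head'_iff.1 hru
  have hd : d ∈ (N.inducedOn {u, u'}).verts :=
    mem_inducedOn_verts.2 ⟨(hG.mem_verts hrd).2, u, by simp, hdu⟩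
  have hr' : r ∈ (N.inducedOn {u, u'}).verts :=
    mem_inducedOn_verts.2 ⟨(hG.mem_verts hrd).1, u, by simp, hru.to_reflTransGen⟩
  have hc : c ∈ (N.inducedOn {u, u'}).verts :=
    mem_inducedOn_verts.2 ⟨(hG.mem_verts hpc).2, u', by simp, hcu'⟩
  refine ⟨hG.inducedOn, fun v hv h0 => ?_,
    fun v => outdeg_inducedOn_le.trans (hN.outdeg_le_two v),
    (outdeg_pos_of_adj (hG.adj_inducedOn hrd hd)).ne', ?_, hG.adj_inducedOn hpr hr',
    ⟨c, hG.adj_inducedOn hpc hc, fun h => hcr (reflTransGen_of_inducedOn h)⟩⟩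
  · simpa using hG.mem_of_outdeg_inducedOn_eq_zero hv h0
  · rw [hG.indeg_inducedOn hr']
    exact (hN.indeg_eq_two_and_outdeg_ne_zero hr).1

end Network

end PhyloNet

theorem normal_not_tree_restriction (N : PhyloNet)
    (hN : N.IsPhyloNetwork) (hnormal : N.IsNormal) (hnt : ¬ N.IsTree) :
    ∃ Y ⊆ N.leaves, Y.card = 2 ∧
      ∀ M, N.IsRestriction Y M → ¬ M.IsNormal := by
  obtain ⟨htc, hns⟩ := hnormal
  have hG := hN.isDag
  obtain ⟨r, hr⟩ : ∃ r, 1 < N.indeg r := by simpa [IsTree] using hnt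
  obtain ⟨-, hr0⟩ := hN.indeg_eq_two_and_outdeg_ne_zero hr
  obtain ⟨p, hpr⟩ := exists_adj_of_indeg_ne_zero (by omega : N.indeg r ≠ 0)
  obtain ⟨d, hrd, u, hu, hdu, hu0⟩ :=
    hG.exists_treeChild_treePath_leaf htc (hG.mem_verts hpr).2 hr0
  obtain ⟨c, ⟨hpc, hc⟩, u', hu', hcu', hu'0⟩ :=
    hG.exists_treeChild_treePath_leaf htc (hG.mem_verts hpr).1 (outdeg_pos_of_adj hpr).ne'
  have hcr' : c ≠ r := by
    rintro rfl
    omega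
  have hcr : ¬ ReflTransGen N.Adj c r :=
    fun h => hns (hasShortcut_of_reflTransGen hpr hpc h hcr')
  have huu' : u ≠ u' := by
    rintro rfl
    rcases comparable_of_treePath (.head hrd hdu) (reflTransGen_of_treePath hcu') with h | h
    · exact hG.not_reflTransGen hpr (reflTransGen_parent h (Ne.symm hcr') hpc hc)
    · exact hcr h
  refine ⟨{u, u'}, ?_, Finset.card_pair huu', fun M hM => ?_⟩
  · simp [Finset.insert_subset_iff, leaves, hu, hu0, hu', hu'0]
  · have hinv := hN.reticulationInv_inducedOn hr hpr hpc hcr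
      (.head' hrd.1 (reflTransGen_of_treePath hdu)) (reflTransGen_of_treePath hcu')
    exact (hinv.of_reflTransGen hM.1).not_isNormal hM.2
end

section
/- Assume GT_ℓ ~ c·ℓ^{-3/2}·8^ℓ·ℓ! with c = sqrt(17)(sqrt(17)−1)/(136·sqrt(π)). Then ∑_{j=1}^{n} C(n,j)·GT_j ~ c·sqrt(e^{1/4})·n^{-3/2}·8^n·n! as n → ∞. -/
/-!
Write `a ℓ = r ℓ · ℓ^(-α) b^ℓ ℓ!` with `r ℓ → L` and substitute `j = n - k`. After dividing by
`n^(-α) b^n n!`, the `k`-th term of the binomial sum becomes `r (n - k) · (n / (n - k))^α · b^(-k) / k!`.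
As `n → ∞` this tends to `L · b^(-k) / k!`. Since `n / (n - k) ≤ k + 1 ≤ 2^k`, it is bounded by the
summable `M (2^|α| / b)^k / k!`, so Tannery's theorem gives the limit `L · exp (1 / b)`.
Galled trees are the case `α = 3/2`, `b = 8`.
-/

open Filter Real Topology Finset

lemma sum_Icc_choose_mul_eq_tsum (a : ℕ → ℝ) (n : ℕ) :
    ∑ j ∈ Icc 1 n, (n.choose j : ℝ) * a j
      = ∑' k, if k < n then (n.choose k : ℝ) * a (n - k) else 0 := by
  rw [tsum_eq_sum (s := range n) fun k hk => if_neg (by simpa using hk)]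
  refine sum_nbij' (n - ·) (n - ·) ?_ ?_ ?_ ?_ ?_ <;> intro j hj <;> simp at hj ⊢
  · omega
  · omega
  · omega
  · omega
  · rw [if_pos (by omega), Nat.sub_sub_self hj.2, Nat.choose_symm hj.2]

lemma div_sub_rpow_le (α : ℝ) {n k : ℕ} (hk : k < n) :
    ((n : ℝ) / (n - k : ℕ)) ^ α ≤ (2 ^ |α|) ^ k := by
  obtain ⟨m, rfl⟩ : ∃ m, n = m + k := ⟨n - k, by omega⟩
  rw [Nat.add_sub_cancel]
  have hm : (1 : ℝ) ≤ m := by exact_mod_cast (show 1 ≤ m by omega)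
  have hk2 : (k : ℝ) + 1 ≤ 2 ^ k := by exact_mod_cast k.lt_two_pow_self
  have h_one_le : 1 ≤ ((m + k : ℕ) : ℝ) / m := by
    rw [le_div_iff₀ (by linarith)]
    push_cast
    linarith [k.cast_nonneg (α := ℝ)]
  have h_le_two_pow : ((m + k : ℕ) : ℝ) / m ≤ 2 ^ k := by
    rw [div_le_iff₀ (by linarith)]
    push_cast
    nlinarith
  calc (((m + k : ℕ) : ℝ) / m) ^ α ≤ (((m + k : ℕ) : ℝ) / m) ^ |α| :=
        rpow_le_rpow_of_exponent_le h_one_le (le_abs_self α)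
    _ ≤ (2 ^ k : ℝ) ^ |α| := rpow_le_rpow (by linarith) h_le_two_pow (abs_nonneg α)
    _ = (2 ^ |α|) ^ k := (rpow_pow_comm zero_le_two _ _).symm

lemma tendsto_div_sub_rpow (α : ℝ) (k : ℕ) :
    Tendsto (fun n : ℕ => ((n : ℝ) / (n - k : ℕ)) ^ α) atTop (𝓝 1) := by
  rw [← tendsto_add_atTop_iff_nat k]
  have h_base : Tendsto (fun m : ℕ => 1 + (k : ℝ) / m) atTop (𝓝 1) := by
    simpa using tendsto_const_nhds.add (tendsto_const_div_atTop_nhds_zero_nat (k : ℝ))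
  have h : Tendsto (fun m : ℕ => (1 + (k : ℝ) / m) ^ α) atTop (𝓝 1) := by
    simpa using h_base.rpow_const (p := α) (Or.inl one_ne_zero)
  refine h.congr' ?_
  filter_upwards [eventually_gt_atTop 0] with m hm
  have : (m : ℝ) ≠ 0 := by positivity
  simp [add_div, this]

noncomputable def factorialGrowth (α b : ℝ) (ℓ : ℕ) : ℝ := (ℓ : ℝ) ^ (-α) * b ^ ℓ * ℓ.factorial

section FactorialGrowth

variable {α b : ℝ}

lemma factorialGrowth_pos (hb : 0 < b) {ℓ : ℕ} (hℓ : 0 < ℓ) : 0 < factorialGrowth α b ℓ := by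
  have : (0 : ℝ) < ℓ := by exact_mod_cast hℓ
  unfold factorialGrowth
  positivity

lemma choose_mul_factorialGrowth_sub_div (hb : 0 < b) {n k : ℕ} (hk : k < n) :
    n.choose k * factorialGrowth α b (n - k) / factorialGrowth α b n
      = ((n : ℝ) / (n - k : ℕ)) ^ α * b⁻¹ ^ k / k.factorial := by
  obtain ⟨m, rfl⟩ : ∃ m, n = m + k := ⟨n - k, by omega⟩
  have hm : (0 : ℝ) < m := by exact_mod_cast (show 0 < m by omega)
  have hmk : (0 : ℝ) < (m + k : ℕ) := by exact_mod_cast (show 0 < m + k by omega)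
  rw [Nat.add_sub_cancel, Nat.cast_choose ℝ (Nat.le_add_left k m), Nat.add_sub_cancel,
    factorialGrowth, factorialGrowth, rpow_neg hm.le, rpow_neg hmk.le, div_rpow hmk.le hm.le,
    pow_add, inv_pow]
  have := rpow_pos_of_pos hm α
  have := rpow_pos_of_pos hmk α
  field_simp

lemma choose_mul_div_factorialGrowth (a : ℕ → ℝ) (hb : 0 < b) {n k : ℕ} (hk : k < n) :
    n.choose k * a (n - k) / factorialGrowth α b n
      = a (n - k) / factorialGrowth α b (n - k)
          * (((n : ℝ) / (n - k : ℕ)) ^ α * b⁻¹ ^ k / k.factorial) := by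
  rw [← choose_mul_factorialGrowth_sub_div hb hk]
  have := (factorialGrowth_pos (α := α) hb (Nat.sub_pos_of_lt hk)).ne'
  field_simp

lemma abs_choose_mul_div_factorialGrowth_le {a : ℕ → ℝ} {M : ℝ} (hb : 0 < b)
    (hM : ∀ ℓ, |a ℓ / factorialGrowth α b ℓ| ≤ M) {n k : ℕ} (hk : k < n) :
    |n.choose k * a (n - k) / factorialGrowth α b n|
      ≤ M * ((2 ^ |α| * b⁻¹) ^ k / k.factorial) := by
  have hw : 0 ≤ ((n : ℝ) / (n - k : ℕ)) ^ α * b⁻¹ ^ k / k.factorial := by positivity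
  have := (abs_nonneg _).trans (hM 0)
  rw [choose_mul_div_factorialGrowth a hb hk, abs_mul, abs_of_nonneg hw, mul_pow]
  gcongr
  · exact hM _
  · exact div_sub_rpow_le α hk

theorem tendsto_sum_choose_mul_div_factorialGrowth {L : ℝ} {a : ℕ → ℝ} (hb : 0 < b)
    (ha : Tendsto (fun ℓ => a ℓ / factorialGrowth α b ℓ) atTop (𝓝 L)) :
    Tendsto (fun n => (∑ j ∈ Icc 1 n, (n.choose j : ℝ) * a j) / factorialGrowth α b n)
      atTop (𝓝 (L * exp b⁻¹)) := by
  obtain ⟨M, hM⟩ := isBounded_iff_forall_norm_le.mp (Metric.isBounded_range_of_tendsto _ ha)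
  have hexp : HasSum (fun k : ℕ => L * (b⁻¹ ^ k / k.factorial)) (L * exp b⁻¹) := by
    rw [exp_eq_exp_ℝ]
    exact (NormedSpace.expSeries_div_hasSum_exp b⁻¹).mul_left L
  simp_rw [sum_Icc_choose_mul_eq_tsum, ← tsum_div_const, ite_div, zero_div, ← hexp.tsum_eq]
  refine tendsto_tsum_of_dominated_convergence
    ((summable_pow_div_factorial (2 ^ |α| * b⁻¹)).mul_left M) (fun k => ?_)
    (Eventually.of_forall fun n k => ?_)
  · have hlim := (ha.comp (tendsto_sub_atTop_nat k)).mul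
      (((tendsto_div_sub_rpow α k).mul_const (b⁻¹ ^ k)).div_const (k.factorial : ℝ))
    rw [one_mul] at hlim
    refine hlim.congr' ?_
    filter_upwards [eventually_gt_atTop k] with n hn
    rw [if_pos hn, choose_mul_div_factorialGrowth a hb hn]
    rfl
  · split_ifs with hk
    · exact abs_choose_mul_div_factorialGrowth_le hb (fun ℓ => hM _ ⟨ℓ, rfl⟩) hk
    · have := (norm_nonneg _).trans (hM _ ⟨0, rfl⟩)
      rw [norm_zero]
      positivity

end FactorialGrowth

theorem galled_trees_subset_sum_asymptotics (GT : ℕ → ℝ)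
    (h : Tendsto (fun ℓ : ℕ => GT ℓ /
        (Real.sqrt 17 * (Real.sqrt 17 - 1) / (136 * Real.sqrt Real.pi) *
          (ℓ : ℝ) ^ (-(3 : ℝ) / 2) * 8 ^ ℓ * ℓ.factorial)) atTop (nhds 1)) :
    Tendsto (fun n : ℕ =>
        (∑ j ∈ Finset.Icc 1 n, (n.choose j : ℝ) * GT j) /
        (Real.sqrt 17 * (Real.sqrt 17 - 1) / (136 * Real.sqrt Real.pi) * Real.exp (1/8) *
          (n : ℝ) ^ (-(3 : ℝ) / 2) * 8 ^ n * n.factorial)) atTop (nhds 1) := by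
  set c := √17 * (√17 - 1) / (136 * √π)
  have hc : c ≠ 0 := by
    have : 1 < √17 := by rw [lt_sqrt zero_le_one]; norm_num
    have := pi_pos
    exact div_ne_zero (by nlinarith) (by positivity)
  have hGT : Tendsto (fun ℓ => GT ℓ / factorialGrowth (3 / 2) 8 ℓ) atTop (𝓝 c) := by
    refine one_mul c ▸ (h.mul_const c).congr fun ℓ => ?_
    rw [factorialGrowth, ← neg_div, mul_assoc c, mul_assoc c, ← div_div, div_right_comm,
      div_mul_cancel₀ _ hc]
  have hsum := (tendsto_sum_choose_mul_div_factorialGrowth (by norm_num) hGT).div_const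
    (c * exp (1 / 8))
  rw [inv_eq_one_div, div_self (mul_ne_zero hc (exp_ne_zero _))] at hsum
  refine hsum.congr fun n => ?_
  rw [div_div, factorialGrowth, neg_div]
  ring_nf
end

section
/- Suppose there exists c > 0 with TC_ℓ = Ω(c^ℓ·ℓ^{2ℓ}) and GT_ℓ = O(d^ℓ·ℓ^{ℓ}) for some d > 0, where TC_ℓ and GT_ℓ are the counts of tree-child networks and galled trees on ℓ labelled leaves. Then ∑_{j=1}^n C(n,j)·GT_j / ∑_{j=1}^n C(n,j)·TC_j → 0 as n → ∞. -/
open Filter Topology Finset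

/-!
Bounding every `GT j` with `j ≤ n` by `C (e n)^n` and using `∑_j C(n,j) ≤ 2^n` gives a numerator
of at most `C (2 e n)^n`, while the denominator is at least its last term
`TC n ≥ K c^n n^{2n}`. The ratio is therefore `O((2e / (c n))^n)`, which tends to `0`.
-/

theorem tendsto_div_natCast_pow_self_atTop (x : ℝ) :
    Tendsto (fun n : ℕ => (x / n) ^ n) atTop (𝓝 0) := by
  refine squeeze_zero_norm' ?_ (tendsto_pow_atTop_nhds_zero_of_lt_one (r := 1 / 2)
    (by norm_num) (by norm_num))
  filter_upwards [(tendsto_natCast_atTop_atTop (R := ℝ)).eventually_ge_atTop (2 * |x|),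
    eventually_gt_atTop 0] with n hxn hn
  have hn' : (0 : ℝ) < n := by exact_mod_cast hn
  have hx : |x| / n ≤ 1 / 2 := by
    rw [div_le_iff₀ hn']
    linarith
  rw [norm_pow, norm_div, Real.norm_eq_abs, RCLike.norm_natCast]
  exact pow_le_pow_left₀ (by positivity) hx n

theorem mul_natCast_pow_self_le_of_le {e : ℝ} (he : 1 ≤ e) {j n : ℕ} (hjn : j ≤ n) :
    (e * j) ^ j ≤ (e * n) ^ n := by
  rcases n.eq_zero_or_pos with rfl | hn
  · rw [Nat.le_zero.mp hjn]
  have hen : 1 ≤ e * n := one_le_mul_of_one_le_of_one_le he (by exact_mod_cast hn)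
  calc (e * j) ^ j ≤ (e * n) ^ j := by gcongr
    _ ≤ (e * n) ^ n := pow_le_pow_right₀ hen hjn

/-- The finitely many `ℓ` below the threshold are absorbed into `C`, since `(e ℓ)^ℓ ≥ 1` for
`e ≥ 1`, also at `ℓ = 0` where `0^0 = 1`. -/
theorem exists_forall_le_mul_mul_natCast_pow_self {a : ℕ → ℝ} {d D : ℝ}
    (ha : ∀ᶠ ℓ : ℕ in atTop, a ℓ ≤ D * d ^ ℓ * (ℓ : ℝ) ^ ℓ) :
    ∃ C ≥ (0 : ℝ), ∃ e ≥ (1 : ℝ), ∀ ℓ : ℕ, a ℓ ≤ C * (e * ℓ) ^ ℓ := by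
  obtain ⟨L, hL⟩ := eventually_atTop.mp ha
  set M := ∑ i ∈ range L, |a i|
  have hM : 0 ≤ M := sum_nonneg fun i _ => abs_nonneg (a i)
  refine ⟨|D| + M, by positivity, max |d| 1, le_max_right _ _, fun ℓ => ?_⟩
  have hpow : 1 ≤ (max |d| 1 * ℓ) ^ ℓ := by
    simpa using mul_natCast_pow_self_le_of_le (le_max_right |d| 1) (Nat.zero_le ℓ)
  rcases lt_or_ge ℓ L with hℓ | hℓ
  · have hM' : a ℓ ≤ M :=
      (le_abs_self _).trans (single_le_sum (fun i _ => abs_nonneg (a i)) (mem_range.mpr hℓ))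
    nlinarith [abs_nonneg D]
  · calc a ℓ ≤ D * d ^ ℓ * (ℓ : ℝ) ^ ℓ := hL ℓ hℓ
      _ ≤ |D| * |d| ^ ℓ * (ℓ : ℝ) ^ ℓ := by
        refine mul_le_mul_of_nonneg_right ?_ (by positivity)
        rw [← abs_pow, ← abs_mul]
        exact le_abs_self _
      _ ≤ |D| * (max |d| 1 * ℓ) ^ ℓ := by
        rw [mul_assoc, mul_pow]
        gcongr
        exact le_max_left _ _
      _ ≤ (|D| + M) * (max |d| 1 * ℓ) ^ ℓ := by gcongr; linarith

theorem sum_Icc_choose_mul_le (n : ℕ) {a : ℕ → ℝ} {B : ℝ} (hB : 0 ≤ B)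
    (ha : ∀ j ∈ Icc 1 n, a j ≤ B) :
    ∑ j ∈ Icc 1 n, (n.choose j : ℝ) * a j ≤ 2 ^ n * B := by
  have hsub : Icc 1 n ⊆ range (n + 1) := fun j hj => by
    rw [mem_Icc] at hj
    rw [mem_range]
    omega
  calc ∑ j ∈ Icc 1 n, (n.choose j : ℝ) * a j ≤ ∑ j ∈ Icc 1 n, (n.choose j : ℝ) * B :=
        sum_le_sum fun j hj => by gcongr; exact ha j hj
    _ ≤ ∑ j ∈ range (n + 1), (n.choose j : ℝ) * B :=
        sum_le_sum_of_subset_of_nonneg hsub fun _ _ _ => by positivity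
    _ = 2 ^ n * B := by
        rw [← sum_mul, ← Nat.cast_sum, Nat.sum_range_choose]
        push_cast
        rfl

theorem le_sum_Icc_choose_mul {n : ℕ} (hn : 1 ≤ n) {a : ℕ → ℝ} (ha : ∀ j, 0 ≤ a j) :
    a n ≤ ∑ j ∈ Icc 1 n, (n.choose j : ℝ) * a j := by
  simpa using single_le_sum (f := fun j => (n.choose j : ℝ) * a j)
    (fun j _ => mul_nonneg (Nat.cast_nonneg _) (ha j)) (mem_Icc.mpr ⟨hn, le_rfl⟩)

theorem galled_trees_negligible_in_treechild (TC GT : ℕ → ℕ)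
    (hTC : ∃ c > (0 : ℝ), ∃ K > (0 : ℝ), ∀ᶠ ℓ : ℕ in atTop,
      K * c ^ ℓ * (ℓ : ℝ) ^ (2 * ℓ) ≤ TC ℓ)
    (hGT : ∃ d > (0 : ℝ), ∃ D > (0 : ℝ), ∀ᶠ ℓ : ℕ in atTop,
      (GT ℓ : ℝ) ≤ D * d ^ ℓ * (ℓ : ℝ) ^ ℓ) :
    Tendsto (fun n : ℕ =>
        (∑ j ∈ Finset.Icc 1 n, (n.choose j : ℝ) * GT j) /
        (∑ j ∈ Finset.Icc 1 n, (n.choose j : ℝ) * TC j)) atTop (nhds 0) := by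
  obtain ⟨c, hc, K, hK, hTC⟩ := hTC
  obtain ⟨d, -, D, -, hGT⟩ := hGT
  obtain ⟨C, hC, e, he, hGT⟩ := exists_forall_le_mul_mul_natCast_pow_self hGT
  have hlim := (tendsto_div_natCast_pow_self_atTop (2 * e / c)).const_mul (C / K)
  rw [mul_zero] at hlim
  refine squeeze_zero' (Eventually.of_forall fun n => by positivity) ?_ hlim
  filter_upwards [hTC, eventually_ge_atTop 1] with n hTCn hn
  have hnum : ∑ j ∈ Icc 1 n, (n.choose j : ℝ) * GT j ≤ 2 ^ n * (C * (e * n) ^ n) :=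
    sum_Icc_choose_mul_le n (by positivity) fun j hj =>
      (hGT j).trans (by gcongr; exact mul_natCast_pow_self_le_of_le he (mem_Icc.mp hj).2)
  have hden : K * c ^ n * (n : ℝ) ^ (2 * n) ≤ ∑ j ∈ Icc 1 n, (n.choose j : ℝ) * TC j :=
    hTCn.trans (le_sum_Icc_choose_mul hn fun j => Nat.cast_nonneg _)
  calc _ ≤ 2 ^ n * (C * (e * n) ^ n) / (K * c ^ n * (n : ℝ) ^ (2 * n)) :=
        div_le_div₀ (by positivity) hnum (by positivity) hden
    _ = C / K * (2 * e / c / n) ^ n := by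
        rw [mul_comm 2 n, pow_mul, div_pow, div_pow, mul_pow, mul_pow]
        field_simp
end

section
/- The number of simplicial tree-child networks with exactly k reticulations and ℓ leaves labelled by {1,...,ℓ} is STC_{ℓ,k} = C(ℓ,k)·(2ℓ−2)!/(2^{ℓ−1}·(ℓ−k−1)!), and for fixed k this satisfies STC_{ℓ,k} ~ (sqrt(2)/(2·k!))·ℓ^{2k−1}·(2/e)^ℓ·ℓ^ℓ as ℓ → ∞. -/
/-!
For `ℓ = n + 1` with `n ≥ k` the closed form factors as
`C(n+1, k) · n(n-1)⋯(n-k+1) · (2n)! / (2ⁿ n!)`. The first two factors are asymptotic to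
`(n+1)ᵏ / k!` and `(n+1)ᵏ`, Stirling's formula gives `(2n)! / (2ⁿ n!) ~ √2 (2/e)ⁿ nⁿ`, and
`nⁿ ~ (n+1)ⁿ / e` because `(1 + 1/n)ⁿ → e`.
-/

open Filter Real Asymptotics Nat

theorem isEquivalent_natCast_add_one :
    (fun n : ℕ => (n : ℝ) + 1) ~[atTop] fun n => (n : ℝ) := by
  refine IsEquivalent.refl.add_const_of_norm_tendsto_atTop ?_
  exact tendsto_norm_atTop_atTop.comp tendsto_natCast_atTop_atTop

theorem isEquivalent_pow_self :
    (fun n : ℕ => (n : ℝ) ^ n) ~[atTop] fun n => ((n : ℝ) + 1) ^ n / exp 1 := by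
  refine isEquivalent_of_tendsto_one ?_
  have h := tendsto_const_nhds (x := exp 1) |>.div (tendsto_one_add_div_pow_exp 1)
    (exp_pos 1).ne'
  rw [div_self (exp_pos 1).ne'] at h
  refine h.congr' ?_
  filter_upwards [eventually_ne_atTop 0] with n hn
  have hn' : (n : ℝ) ≠ 0 := by exact_mod_cast hn
  simp only [Pi.div_apply]
  rw [one_add_div hn', div_pow]
  field_simp

theorem isEquivalent_factorial_two_mul_div :
    (fun n : ℕ => ((2 * n)! : ℝ) / (2 ^ n * n !)) ~[atTop]
      fun n => √2 * (2 / exp 1) ^ n * (n : ℝ) ^ n := by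
  have h2n : Tendsto (fun n : ℕ => 2 * n) atTop atTop :=
    tendsto_id.const_mul_atTop' two_pos
  have h := (Stirling.factorial_isEquivalent_stirling.comp_tendsto h2n).div
    ((IsEquivalent.refl (u := fun n : ℕ => (2 : ℝ) ^ n)).mul
      Stirling.factorial_isEquivalent_stirling)
  refine (h.congr_left (Eventually.of_forall fun n => by simp)).congr_right ?_
  filter_upwards [eventually_ne_atTop 0] with n hn
  have hn' : (0 : ℝ) < n := by exact_mod_cast Nat.pos_of_ne_zero hn
  simp only [Function.comp, Pi.div_apply, Pi.mul_apply]
  push_cast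
  rw [show 2 * (2 * (n : ℝ)) * π = 2 * (2 * n * π) by ring, sqrt_mul zero_le_two]
  have hsplit :
      (2 * n / exp 1) ^ (2 * n) = 2 ^ n * ((2 / exp 1) ^ n * n ^ n) * (n / exp 1) ^ n := by
    rw [pow_mul, ← mul_pow, ← mul_pow, ← mul_pow]
    congr 1
    field_simp
  rw [hsplit]
  field_simp

theorem factorial_two_mul_div_factorial_sub {n k : ℕ} (h : k ≤ n) :
    ((2 * n)! : ℝ) / (2 ^ n * (n - k)!) =
      n.descFactorial k * ((2 * n)! / (2 ^ n * n !)) := by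
  have hd : (n.descFactorial k : ℝ) ≠ 0 := by
    exact_mod_cast descFactorial_eq_zero_iff_lt.not.mpr (not_lt.mpr h)
  rw [← factorial_mul_descFactorial h]
  push_cast
  field_simp

noncomputable def stc (ℓ k : ℕ) : ℝ :=
  (ℓ.choose k : ℝ) * (2 * ℓ - 2)! / (2 ^ (ℓ - 1) * (ℓ - k - 1)!)

theorem stc_succ {n k : ℕ} (h : k ≤ n) :
    stc (n + 1) k = (n + 1).choose k * (n.descFactorial k * ((2 * n)! / (2 ^ n * n !))) := by
  rw [stc, mul_div_assoc, ← factorial_two_mul_div_factorial_sub h,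
    show 2 * (n + 1) - 2 = 2 * n by omega, show n + 1 - k - 1 = n - k by omega, Nat.add_sub_cancel]

theorem stc_isEquivalent (k : ℕ) :
    (fun ℓ => stc ℓ k) ~[atTop]
      fun ℓ => √2 / (2 * k !) * (ℓ : ℝ) ^ (2 * (k : ℝ) - 1) * (2 / exp 1) ^ ℓ *
        (ℓ : ℝ) ^ ℓ := by
  rw [← map_add_atTop_eq_nat 1, isEquivalent_map]
  have hC := (isEquivalent_choose k).comp_tendsto (tendsto_add_atTop_nat 1)
  have hD := (isEquivalent_descFactorial k).trans (isEquivalent_natCast_add_one.symm.pow k)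
  have hF := isEquivalent_factorial_two_mul_div.trans
    ((IsEquivalent.refl (u := fun n : ℕ => √2 * (2 / exp 1) ^ n)).mul isEquivalent_pow_self)
  refine ((hC.mul (hD.mul hF)).congr_left ?_).congr_right ?_
  · filter_upwards [eventually_ge_atTop k] with n hn
    exact (stc_succ hn).symm
  · refine Eventually.of_forall fun n => ?_
    have hn : (0 : ℝ) < n + 1 := by positivity
    simp only [Function.comp, Pi.mul_apply, Pi.pow_apply]
    push_cast
    rw [Real.rpow_sub hn, Real.rpow_one,
      show 2 * (k : ℝ) = ((2 * k : ℕ) : ℝ) by push_cast; ring, Real.rpow_natCast,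
      pow_succ (2 / exp 1), pow_succ _ n]
    field_simp
    ring

theorem simplicial_treechild_asymptotics (k : ℕ) :
    Tendsto (fun ℓ : ℕ =>
        ((ℓ.choose k : ℝ) * (2 * ℓ - 2).factorial /
            (2 ^ (ℓ - 1) * (ℓ - k - 1).factorial)) /
          (Real.sqrt 2 / (2 * k.factorial) * (ℓ : ℝ) ^ (2 * (k : ℝ) - 1) *
            (2 / Real.exp 1) ^ ℓ * (ℓ : ℝ) ^ ℓ)) atTop (nhds 1) := by
  refine (isEquivalent_iff_tendsto_one ?_).mp (stc_isEquivalent k)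
  filter_upwards [eventually_ne_atTop 0] with ℓ hℓ
  have : (0 : ℝ) < ℓ := by exact_mod_cast Nat.pos_of_ne_zero hℓ
  positivity
end
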